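/- arXiv:1907.09994 — 6 statements merged into one kernel-verified Lean document; each statement's English description precedes it below -/
import Mathlib

section
/- For every graph G, pn_ℓ(G) ≥ mad(G)/4, where mad(G) is the maximum average degree of G. -/
open SimpleGraph

/-- Two edges `e₁ = s(a,c)` and `e₂ = s(b,d)` cross with respect to the spine
position function `pos` if `a ≺ b ≺ c ≺ d`. -/
def Crosses {V : Type*} (pos : V → ℕ) (e₁ e₂ : Sym2 V) : Prop :=
  ∃ a b c d : V, e₁ = s(a, c) ∧ e₂ = s(b, d) ∧
    pos a < pos b ∧ pos b < pos c ∧ pos c < pos d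

/-- A linear embedding of `G`: an (injective) spine position function together with
an assignment of edges to pages (indexed by naturals). -/
structure LinearEmbedding {V : Type*} (G : SimpleGraph V) where
  pos : V → ℕ
  inj : Function.Injective pos
  page : Sym2 V → ℕ

namespace LinearEmbedding

variable {V : Type*} {G : SimpleGraph V} (L : LinearEmbedding G)

/-- The set of indices of nonempty pages. -/
def pages : Set ℕ := {i | ∃ e ∈ G.edgeSet, L.page e = i}

/-- The number of (nonempty) pages. -/
noncomputable def pageCount : ℕ := L.pages.ncard

/-- The set of pages having an edge incident to `v`. -/
def pagesAt (v : V) : Set ℕ := {i | ∃ e ∈ G.edgeSet, v ∈ e ∧ L.page e = i}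

/-- The subgraph of `G` formed by the edges on page `i`. -/
def pageGraph (i : ℕ) : SimpleGraph V :=
  fromEdgeSet {e | e ∈ G.edgeSet ∧ L.page e = i}

/-- The set of vertices incident to an edge on page `i`. -/
def pageVerts (i : ℕ) : Set V := {v | ∃ e ∈ G.edgeSet, L.page e = i ∧ v ∈ e}

/-- The set of edges on page `i`. -/
def pageEdges (i : ℕ) : Set (Sym2 V) := {e | e ∈ G.edgeSet ∧ L.page e = i}

/-- A book embedding: no two edges on a common page cross. -/
def IsBook : Prop :=
  ∀ e₁ ∈ G.edgeSet, ∀ e₂ ∈ G.edgeSet, L.page e₁ = L.page e₂ → ¬ Crosses L.pos e₁ e₂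

/-- A `k`-local embedding: every vertex has incident edges on at most `k` pages. -/
noncomputable def IsLocal (k : ℕ) : Prop := ∀ v : V, (L.pagesAt v).ncard ≤ k

/-- A union embedding: any two edges lying on the same page and in the same
connected component of that page do not cross. -/
def IsUnion : Prop :=
  ∀ e₁ ∈ G.edgeSet, ∀ e₂ ∈ G.edgeSet, L.page e₁ = L.page e₂ →
    (∃ u v, u ∈ e₁ ∧ v ∈ e₂ ∧ (L.pageGraph (L.page e₁)).Reachable u v) →
    ¬ Crosses L.pos e₁ e₂

/-- A forest embedding: the edges of each page form a forest. -/
def IsForestEmbedding : Prop := ∀ i : ℕ, (L.pageGraph i).IsAcyclic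

end LinearEmbedding

/-- The (classical) page number of `G`. -/
noncomputable def pn {V : Type*} (G : SimpleGraph V) : ℕ :=
  sInf {k | ∃ L : LinearEmbedding G, L.IsBook ∧ L.pageCount ≤ k}

/-- The local page number of `G`. -/
noncomputable def pnLoc {V : Type*} (G : SimpleGraph V) : ℕ :=
  sInf {k | ∃ L : LinearEmbedding G, L.IsBook ∧ L.IsLocal k}

/-- The union page number of `G`. -/
noncomputable def pnUnion {V : Type*} (G : SimpleGraph V) : ℕ :=
  sInf {k | ∃ L : LinearEmbedding G, L.IsUnion ∧ L.pageCount ≤ k}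

/-- The maximum average degree of `G`. -/
noncomputable def mad {V : Type*} (G : SimpleGraph V) : ℝ :=
  sSup {x : ℝ | ∃ H : G.Subgraph, H.verts.Nonempty ∧
    x = 2 * H.edgeSet.ncard / H.verts.ncard}

lemma key_count {V : Type*} [Nonempty V] (pos : V → ℕ) (hpos : Function.Injective pos)
    (E : Finset (Sym2 V)) (T : Finset V)
    (hdiag : ∀ e ∈ E, ¬ e.IsDiag)
    (hnc : ∀ e1 ∈ E, ∀ e2 ∈ E, ¬ Crosses pos e1 e2)
    (hT : ∀ e ∈ E, ∀ v ∈ e, v ∈ T) :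
    E.card ≤ 2 * T.card := by
  classical
  have hrep : ∀ e : Sym2 V, ∃ p : V × V, e ∈ E → e = s(p.1, p.2) ∧ pos p.1 < pos p.2 := by
    intro e
    by_cases he : e ∈ E
    · induction e using Sym2.ind with
      | _ a b =>
        have hab : a ≠ b := fun h => hdiag _ he (by simp [h])
        have hpab : pos a ≠ pos b := fun h => hab (hpos h)
        rcases lt_or_gt_of_ne hpab with h | h
        · exact ⟨(a, b), fun _ => ⟨rfl, h⟩⟩
        · exact ⟨(b, a), fun _ => ⟨Sym2.eq_swap, h⟩⟩
    · exact ⟨(Classical.arbitrary V, Classical.arbitrary V), fun h => absurd h he⟩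
  choose rep hrep using hrep
  set lft : Sym2 V → V := fun e => (rep e).1 with hlftdef
  set rgt : Sym2 V → V := fun e => (rep e).2 with hrgtdef
  have heq : ∀ e ∈ E, e = s(lft e, rgt e) := fun e he => (hrep e he).1
  have hlt : ∀ e ∈ E, pos (lft e) < pos (rgt e) := fun e he => (hrep e he).2
  set maxe : Sym2 V → Prop :=
    fun e => ∀ e' ∈ E, lft e' = lft e → pos (rgt e') ≤ pos (rgt e) with hmaxdef
  set f : Sym2 V → V × Bool := fun e => if maxe e then (lft e, false) else (rgt e, true)
    with hfdef
  have hmaps : ∀ e ∈ E, f e ∈ T ×ˢ (Finset.univ : Finset Bool) := by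
    intro e he
    have h1 : lft e ∈ T := by
      have : lft e ∈ s(lft e, rgt e) := Sym2.mem_mk_left _ _
      rw [← heq e he] at this
      exact hT e he _ this
    have h2 : rgt e ∈ T := by
      have : rgt e ∈ s(lft e, rgt e) := Sym2.mem_mk_right _ _
      rw [← heq e he] at this
      exact hT e he _ this
    simp only [hfdef]
    split_ifs <;> simp [h1, h2]
  have claim : ∀ e1 ∈ E, ∀ e2 ∈ E, ¬ maxe e2 → rgt e1 = rgt e2 →
      pos (lft e1) < pos (lft e2) → False := by
    intro e1 he1 e2 he2 hm hr hl
    have hm' : ∃ e3 ∈ E, lft e3 = lft e2 ∧ pos (rgt e2) < pos (rgt e3) := by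
      by_contra hcon
      push_neg at hcon
      exact hm (fun e' he' hle => hcon e' he' hle)
    obtain ⟨e3, he3, hl3, hr3⟩ := hm'
    exact hnc e1 he1 e3 he3 ⟨lft e1, lft e3, rgt e1, rgt e3, heq e1 he1, heq e3 he3,
      by rw [hl3]; exact hl, by rw [hl3, hr]; exact hlt e2 he2,
      by rw [hr]; exact hr3⟩
  have hinj : Set.InjOn f ↑E := by
    intro e1 he1 e2 he2 hfe
    simp only [Finset.mem_coe] at he1 he2
    simp only [hfdef] at hfe
    split_ifs at hfe with hm1 hm2 hm2 <;> simp only [Prod.mk.injEq] at hfe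
    · have hl := hfe.1
      have h12 : pos (rgt e1) ≤ pos (rgt e2) := hm2 e1 he1 hl
      have h21 : pos (rgt e2) ≤ pos (rgt e1) := hm1 e2 he2 hl.symm
      have hrg : rgt e1 = rgt e2 := hpos (le_antisymm h12 h21)
      rw [heq e1 he1, heq e2 he2, hl, hrg]
    · exact absurd hfe.2 (by simp)
    · exact absurd hfe.2 (by simp)
    · have hr := hfe.1
      by_cases hl : lft e1 = lft e2
      · rw [heq e1 he1, heq e2 he2, hl, hr]
      · have hpl : pos (lft e1) ≠ pos (lft e2) := fun h => hl (hpos h)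
        rcases lt_or_gt_of_ne hpl with h | h
        · exact absurd (claim e1 he1 e2 he2 hm2 hr h) (fun x => x)
        · exact absurd (claim e2 he2 e1 he1 hm1 hr.symm h) (fun x => x)
  have := Finset.card_le_card_of_injOn f hmaps hinj
  simpa [Finset.card_product, Fintype.card_bool, mul_comm] using this

lemma main_count {V : Type*} [Fintype V] [Nonempty V] {G : SimpleGraph V}
    (L : LinearEmbedding G) (hB : L.IsBook) {k : ℕ} (hL : L.IsLocal k)
    (H : G.Subgraph) : H.edgeSet.ncard ≤ 2 * k * H.verts.ncard := by
  classical
  have hEfin : H.edgeSet.Finite := Set.toFinite _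
  have hVfin : H.verts.Finite := Set.toFinite _
  set EH : Finset (Sym2 V) := hEfin.toFinset with hEHdef
  set VH : Finset V := hVfin.toFinset with hVHdef
  set P : Finset ℕ := EH.image L.page with hPdef
  set Ei : ℕ → Finset (Sym2 V) := fun i => EH.filter (fun e => L.page e = i) with hEidef
  set Ti : ℕ → Finset V := fun i => VH.filter (fun v => ∃ e ∈ Ei i, v ∈ e) with hTidef
  have hEHmem : ∀ e ∈ EH, e ∈ H.edgeSet := fun e he => (Set.Finite.mem_toFinset _).1 he
  have hEG : ∀ e ∈ EH, e ∈ G.edgeSet := fun e he => H.edgeSet_subset (hEHmem e he)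
  have card_eq : EH.card = ∑ i ∈ P, (Ei i).card :=
    Finset.card_eq_sum_card_fiberwise (fun e he => Finset.mem_image_of_mem _ he)
  have step2 : ∀ i, (Ei i).card ≤ 2 * (Ti i).card := by
    intro i
    apply key_count L.pos L.inj
    · intro e he
      exact G.not_isDiag_of_mem_edgeSet (hEG e (Finset.mem_filter.1 he).1)
    · intro e1 he1 e2 he2
      obtain ⟨he1', hp1⟩ := Finset.mem_filter.1 he1
      obtain ⟨he2', hp2⟩ := Finset.mem_filter.1 he2
      exact hB e1 (hEG _ he1') e2 (hEG _ he2') (hp1.trans hp2.symm)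
    · intro e he v hv
      refine Finset.mem_filter.2 ⟨?_, e, he, hv⟩
      exact (Set.Finite.mem_toFinset _).2
        (SimpleGraph.Subgraph.mem_verts_of_mem_edge
          (hEHmem e (Finset.mem_filter.1 he).1) hv)
  have step3 : ∑ i ∈ P, (Ti i).card ≤ k * VH.card := by
    have hswap : ∑ i ∈ P, (Ti i).card
        = ∑ v ∈ VH, (P.filter (fun i => v ∈ Ti i)).card := by
      simp only [hTidef, Finset.card_filter]
      rw [Finset.sum_comm]
      refine Finset.sum_congr rfl (fun v hv => Finset.sum_congr rfl (fun i hi => ?_))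
      congr 1
      simp [Finset.mem_filter, hv]
    rw [hswap]
    have hbound : ∀ v ∈ VH, (P.filter (fun i => v ∈ Ti i)).card ≤ k := by
      intro v hv
      have hsub : ↑(P.filter (fun i => v ∈ Ti i)) ⊆ L.pagesAt v := by
        intro i hi
        simp only [Finset.coe_filter, Set.mem_setOf_eq] at hi
        obtain ⟨hiP, hvT⟩ := hi
        obtain ⟨-, e, he, hve⟩ := Finset.mem_filter.1 hvT
        obtain ⟨heE, hpage⟩ := Finset.mem_filter.1 he
        exact ⟨e, hEG e heE, hve, hpage⟩
      have hfin : (L.pagesAt v).Finite := by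
        apply Set.Finite.subset (Set.finite_range L.page)
        rintro i ⟨e, -, -, hpage⟩
        exact ⟨e, hpage⟩
      calc (P.filter (fun i => v ∈ Ti i)).card
          = (↑(P.filter (fun i => v ∈ Ti i)) : Set ℕ).ncard := (Set.ncard_coe_finset _).symm
        _ ≤ (L.pagesAt v).ncard := Set.ncard_le_ncard hsub hfin
        _ ≤ k := hL v
    calc ∑ v ∈ VH, (P.filter (fun i => v ∈ Ti i)).card ≤ ∑ v ∈ VH, k :=
          Finset.sum_le_sum hbound
      _ = VH.card * k := by rw [Finset.sum_const, smul_eq_mul]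
      _ = k * VH.card := mul_comm _ _
  have final : EH.card ≤ 2 * k * VH.card := by
    calc EH.card = ∑ i ∈ P, (Ei i).card := card_eq
      _ ≤ ∑ i ∈ P, 2 * (Ti i).card := Finset.sum_le_sum (fun i _ => step2 i)
      _ = 2 * ∑ i ∈ P, (Ti i).card := by rw [Finset.mul_sum]
      _ ≤ 2 * (k * VH.card) := by omega
      _ = 2 * k * VH.card := by ring
  rw [Set.ncard_eq_toFinset_card _ hEfin, Set.ncard_eq_toFinset_card _ hVfin]
  exact final


/-- `pnℓ(G) ≥ mad(G)/4`. -/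
theorem pnLoc_ge_mad_div_four {V : Type*} [Fintype V] [Nonempty V]
    (G : SimpleGraph V) : mad G / 4 ≤ (pnLoc G : ℝ) := by
  classical
  obtain ⟨f, hf⟩ := exists_injective_nat V
  obtain ⟨g, hg⟩ := exists_injective_nat (Sym2 V)
  have hbook0 : (⟨f, hf, g⟩ : LinearEmbedding G).IsBook := by
    intro e1 he1 e2 he2 hpage hcross
    obtain ⟨a, b, c, d, h1, h2, hab, hbc, hcd⟩ := hcross
    have he : e1 = e2 := hg hpage
    rw [he, h2] at h1
    rcases Sym2.eq_iff.1 h1 with ⟨rfl, rfl⟩ | ⟨rfl, rfl⟩ <;> omega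
  have hloc0 : (⟨f, hf, g⟩ : LinearEmbedding G).IsLocal (Set.univ : Set (Sym2 V)).ncard := by
    intro v
    have hsub : (⟨f, hf, g⟩ : LinearEmbedding G).pagesAt v ⊆ g '' Set.univ := by
      rintro i ⟨e, -, -, hpage⟩
      exact ⟨e, trivial, hpage⟩
    calc ((⟨f, hf, g⟩ : LinearEmbedding G).pagesAt v).ncard
        ≤ (g '' Set.univ).ncard := Set.ncard_le_ncard hsub (Set.toFinite _)
      _ ≤ (Set.univ : Set (Sym2 V)).ncard := Set.ncard_image_le (Set.toFinite _)
  have hne : {k | ∃ L : LinearEmbedding G, L.IsBook ∧ L.IsLocal k}.Nonempty :=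
    ⟨_, ⟨f, hf, g⟩, hbook0, hloc0⟩
  obtain ⟨L, hB, hL⟩ := Nat.sInf_mem hne
  rw [div_le_iff₀ (by norm_num : (0:ℝ) < 4)]
  apply Real.sSup_le
  · rintro x ⟨H, hHne, rfl⟩
    have hVpos : 0 < (H.verts.ncard : ℝ) := by
      exact_mod_cast (Set.ncard_pos (Set.toFinite _)).2 hHne
    rw [div_le_iff₀ hVpos]
    have h := main_count L hB hL H
    have h' : (H.edgeSet.ncard : ℝ) ≤ 2 * (pnLoc G : ℝ) * (H.verts.ncard : ℝ) := by
      exact_mod_cast h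
    nlinarith
  · positivity
end

section
/- For every graph G, pn_ℓ(G) ≤ mad(G)/2 + 2 and pn_u(G) ≤ mad(G) + 2. -/
open SimpleGraph

/-!
Orient `G` so that every vertex is the head of at most `⌈mad G / 2⌉` edges (Hall's theorem) and
put each edge on the page named after its tail. Every page is a star, hence crossing-free, and a
vertex only sees its own page and the pages of the tails of the edges it heads.

By Nash-Williams' theorem `G` is covered by `k + 1` forests with `2k ≤ mad G + 1`. One forest is
laid out without crossings by inserting each leaf next to its neighbour; each other forest splits
into two star forests, and a connected star never crosses itself. This gives a union embedding
with `2k + 1` pages.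
-/

lemma not_crosses_of_mem {V : Type*} {pos : V → ℕ} {e₁ e₂ : Sym2 V} {w : V} (h₁ : w ∈ e₁)
    (h₂ : w ∈ e₂) : ¬Crosses pos e₁ e₂ := by
  rintro ⟨a, b, c, d, rfl, rfl, hab, hbc, hcd⟩
  rw [Sym2.mem_iff] at h₁ h₂
  rcases h₁ with rfl | rfl <;> rcases h₂ with rfl | rfl <;> omega

namespace SimpleGraph

variable {V : Type*} {G H : SimpleGraph V} {k : ℕ} {u v x y a b : V}

lemma Reachable.of_forall_adj (h : ∀ u v, G.Adj u v → H.Reachable u v) (huv : G.Reachable u v) :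
    H.Reachable u v := by
  obtain ⟨p⟩ := huv
  induction p with
  | nil => rfl
  | cons hadj _ ih => exact (h _ _ hadj).trans ih

lemma Reachable.deleteEdges_or (huv : G.Reachable u v) (a b : V) :
    (G.deleteEdges {s(a, b)}).Reachable u v ∨
      ((G.deleteEdges {s(a, b)}).Reachable u a ∧ (G.deleteEdges {s(a, b)}).Reachable b v) ∨
      ((G.deleteEdges {s(a, b)}).Reachable u b ∧ (G.deleteEdges {s(a, b)}).Reachable a v) := by
  obtain ⟨p⟩ := huv
  induction p with
  | nil => exact Or.inl .rfl
  | @cons u w v hadj _ ih =>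
    by_cases he : s(u, w) = s(a, b)
    · rcases Sym2.eq_iff.1 he with ⟨rfl, rfl⟩ | ⟨rfl, rfl⟩
      · rcases ih with h | ⟨h₁, h₂⟩ | ⟨-, h₂⟩
        · exact Or.inr (Or.inl ⟨.rfl, h⟩)
        · exact Or.inl (h₁.symm.trans h₂)
        · exact Or.inl h₂
      · rcases ih with h | ⟨-, h₂⟩ | ⟨h₁, h₂⟩
        · exact Or.inr (Or.inr ⟨.rfl, h⟩)
        · exact Or.inl h₂
        · exact Or.inl (h₁.symm.trans h₂)
    · have huw : (G.deleteEdges {s(a, b)}).Reachable u w :=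
        (deleteEdges_adj.2 ⟨hadj, he⟩).reachable
      rcases ih with h | ⟨h₁, h₂⟩ | ⟨h₁, h₂⟩
      · exact Or.inl (huw.trans h)
      · exact Or.inr (Or.inl ⟨huw.trans h₁, h₂⟩)
      · exact Or.inr (Or.inr ⟨huw.trans h₁, h₂⟩)

lemma reachable_deleteEdges_sup_edge (hxy : G.Reachable x y) (hab : G.Adj a b)
    (hsep : ¬(G.deleteEdges {s(a, b)}).Reachable x y) :
    (G.deleteEdges {s(a, b)} ⊔ edge x y).Reachable = G.Reachable := by
  ext u v
  refine ⟨.of_forall_adj fun u v huv => ?_, .of_forall_adj fun u v huv => ?_⟩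
  · rcases huv with huv | huv
    · exact (deleteEdges_adj.1 huv).1.reachable
    · rcases (edge_adj _ _ _ _).1 huv with ⟨⟨rfl, rfl⟩ | ⟨rfl, rfl⟩, -⟩
      exacts [hxy, hxy.symm]
  · have hle : G.deleteEdges {s(a, b)} ≤ G.deleteEdges {s(a, b)} ⊔ edge x y := le_sup_left
    by_cases he : s(u, v) = s(a, b)
    · have hxy' : (G.deleteEdges {s(a, b)} ⊔ edge x y).Reachable x y :=
        ((edge_le_iff _).1 le_sup_right).elim (fun h => by subst h; rfl) Adj.reachable
      have hab' : (G.deleteEdges {s(a, b)} ⊔ edge x y).Reachable a b := by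
        rcases hxy.deleteEdges_or a b with h | ⟨h₁, h₂⟩ | ⟨h₁, h₂⟩
        · exact absurd h hsep
        · exact ((h₁.mono hle).symm.trans hxy').trans (h₂.mono hle).symm
        · exact ((h₂.mono hle).trans hxy'.symm).trans (h₁.mono hle)
      rcases Sym2.eq_iff.1 he with ⟨rfl, rfl⟩ | ⟨rfl, rfl⟩
      exacts [hab', hab'.symm]
    · exact (hle (deleteEdges_adj.2 ⟨huv, he⟩)).reachable

lemma IsAcyclic.not_reachable_deleteEdges_of_mem_edges (hG : G.IsAcyclic) {p : G.Walk x y}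
    (hp : p.IsPath) {e : Sym2 V} (he : e ∈ p.edges) : ¬(G.deleteEdges {e}).Reachable x y := by
  classical
  rintro ⟨q⟩
  have hq : ∀ e' ∈ q.toPath.val.edges, e' ∈ G.edgeSet := fun e' he' =>
    (edgeSet_deleteEdges (G := G) _ ▸ q.toPath.val.edges_subset_edgeSet he').1
  have hpq := (hG.subsingleton_path x y).elim ⟨p, hp⟩ ⟨_, q.toPath.2.transfer hq⟩
  rw [Subtype.ext_iff] at hpq
  dsimp only at hpq
  rw [hpq, Walk.edges_transfer] at he
  simpa using q.toPath.val.edges_subset_edgeSet he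

lemma Reachable.exists_adj_dist_add_one (h : G.Reachable u v) (huv : u ≠ v) :
    ∃ w, G.Adj u w ∧ G.dist w v + 1 = G.dist u v := by
  obtain ⟨p, hp⟩ := h.exists_walk_length_eq_dist
  obtain ⟨w, hadj, q, rfl⟩ := p.exists_eq_cons_of_ne huv
  obtain ⟨q', hq'⟩ := Reachable.exists_walk_length_eq_dist ⟨q⟩
  refine ⟨w, hadj, le_antisymm ?_ ?_⟩
  · rw [← hp, Walk.length_cons]
    exact Nat.add_le_add_right (dist_le q) 1
  · rw [← hq']
    exact (dist_le (.cons hadj q')).trans_eq (Walk.length_cons _ _)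

/-- Each `u ≠ r` is sent to the first edge of a shortest path from `u` to `r`. -/
lemma ncard_le_ncard_edgeSet_add_one [Finite V] {U : Set V}
    (hU : ∀ u ∈ U, ∀ v ∈ U, G.Reachable u v) : U.ncard ≤ G.edgeSet.ncard + 1 := by
  rcases U.eq_empty_or_nonempty with rfl | ⟨r, hr⟩
  · simp
  have key : ∀ u ∈ U \ {r}, ∃ w, G.Adj u w ∧ G.dist w r + 1 = G.dist u r := fun u hu =>
    (hU u hu.1 r hr).exists_adj_dist_add_one hu.2
  choose! next hadj hdist using key
  have hinj : Set.InjOn (fun u => s(u, next u)) (U \ {r}) := by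
    intro u hu u' hu' huu'
    rcases Sym2.eq_iff.1 huu' with ⟨h, -⟩ | ⟨h₁, h₂⟩
    · exact h
    · have h := hdist u hu
      have h' := hdist u' hu'
      rw [h₂] at h
      rw [← h₁] at h'
      omega
  rw [← Set.ncard_sdiff_singleton_add_one hr]
  exact Nat.add_le_add_right
    (Set.ncard_le_ncard_of_injOn _ (fun u hu => (hadj u hu)) hinj) 1

lemma IsAcyclic.exists_leaf [Finite V] (hG : G.IsAcyclic) (hne : G ≠ ⊥) :
    ∃ x w, G.Adj x w ∧ ∀ y, G.Adj x y → y = w := by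
  obtain ⟨a, b, hab⟩ : ∃ a b, G.Adj a b := by
    by_contra! h
    exact hne (eq_bot_iff_forall_not_adj.2 h)
  have : Nonempty V := ⟨a⟩
  obtain ⟨x, z, p, hp, hmax⟩ := Walk.exists_isPath_forall_isPath_length_le_length G
  have hnil : ¬p.Nil := by
    intro h
    have := hmax a b _ (Path.singleton hab).2
    rw [h.length_eq_zero] at this
    simp at this
  refine ⟨x, p.snd, p.adj_snd hnil, fun y hy => hG.eq_snd_of_adj_start hp hy ?_⟩
  by_contra hy'
  have := hmax y z _ (hp.cons (h := hy.symm) hy')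
  rw [Walk.length_cons] at this
  omega

theorem IsAcyclic.induction_on_leaf [Finite V] {P : SimpleGraph V → Prop} (bot : P ⊥)
    (leaf : ∀ H x w, H.IsAcyclic → x ≠ w → (∀ y, ¬H.Adj x y) → P H → P (H ⊔ edge x w))
    (hG : G.IsAcyclic) : P G := by
  induction hn : G.edgeSet.ncard using Nat.strong_induction_on generalizing G with
  | _ n ih =>
  by_cases hbot : G = ⊥
  · exact hbot ▸ bot
  obtain ⟨x, w, hxw, hleaf⟩ := hG.exists_leaf hbot
  have hG' : G = G.deleteEdges {s(x, w)} ⊔ edge x w := by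
    rw [deleteEdges, ← edge, sdiff_sup_self, sup_of_le_left ((edge_le_iff _).2 (Or.inr hxw))]
  rw [hG']
  refine leaf _ x w (hG.anti (deleteEdges_le _)) hxw.ne (fun y hy => ?_) (ih _ ?_ (hG.anti
    (deleteEdges_le _)) rfl)
  · obtain ⟨hy, hne⟩ := deleteEdges_adj.1 hy
    exact hne (by rw [hleaf y hy]; rfl)
  · rw [← hn, edgeSet_deleteEdges]
    exact Set.ncard_sdiff_singleton_lt_of_mem hxw

lemma mem_edgeSet_sup_edge {H : SimpleGraph V} {x w : V} (hxw : x ≠ w) {e : Sym2 V} :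
    e ∈ (H ⊔ edge x w).edgeSet ↔ e ∈ H.edgeSet ∨ e = s(x, w) := by
  rw [edgeSet_sup, edgeSet_edge_of_ne hxw, Set.mem_union, Set.mem_singleton_iff]

lemma notMem_of_forall_not_adj {H : SimpleGraph V} {x : V} (hx : ∀ y, ¬H.Adj x y) {e : Sym2 V}
    (he : e ∈ H.edgeSet) : x ∉ e := by
  intro hxe
  rw [← Sym2.other_spec hxe, mem_edgeSet] at he
  exact hx _ he

/-- Place each new leaf right after its neighbour. -/
theorem IsAcyclic.exists_pos_not_crosses [Finite V] (hG : G.IsAcyclic) :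
    ∃ pos : V → ℕ, Function.Injective pos ∧
      ∀ e₁ ∈ G.edgeSet, ∀ e₂ ∈ G.edgeSet, ¬Crosses pos e₁ e₂ := by
  refine hG.induction_on_leaf (P := fun G => ∃ pos : V → ℕ, Function.Injective pos ∧
    ∀ e₁ ∈ G.edgeSet, ∀ e₂ ∈ G.edgeSet, ¬Crosses pos e₁ e₂) ?_
    fun H x w _ hxw hx ⟨pos, hpos, hcross⟩ => ?_
  · obtain ⟨pos, hpos⟩ := exists_injective_nat V
    exact ⟨pos, hpos, by simp⟩
  classical
  have hx' : ∀ e ∈ H.edgeSet, x ∉ e := fun e he => notMem_of_forall_not_adj hx he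
  let pos' : V → ℕ := fun v => if v = x then 2 * pos w + 1 else 2 * pos v
  have hpos'x : pos' x = 2 * pos w + 1 := if_pos rfl
  have hpos'w : pos' w = 2 * pos w := if_neg hxw.symm
  have hpos' : ∀ v, v ≠ x → pos' v = 2 * pos v := fun v hv => if_neg hv
  refine ⟨pos', fun u v huv => ?_, fun e₁ he₁ e₂ he₂ => ?_⟩
  · by_cases hu : u = x <;> by_cases hv : v = x
    · rw [hu, hv]
    · rw [hu, hpos'x, hpos' v hv] at huv; omega
    · rw [hv, hpos'x, hpos' u hu] at huv; omega
    · rw [hpos' u hu, hpos' v hv] at huv; exact hpos (by omega)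
  rintro ⟨a, b, c, d, rfl, rfl, hab, hbc, hcd⟩
  rcases (mem_edgeSet_sup_edge hxw).1 he₁ with he₁ | he₁
  · rcases (mem_edgeSet_sup_edge hxw).1 he₂ with he₂ | he₂
    · have ha : a ≠ x := fun h => hx' _ he₁ (h ▸ Sym2.mem_mk_left _ _)
      have hc : c ≠ x := fun h => hx' _ he₁ (h ▸ Sym2.mem_mk_right _ _)
      have hb : b ≠ x := fun h => hx' _ he₂ (h ▸ Sym2.mem_mk_left _ _)
      have hd : d ≠ x := fun h => hx' _ he₂ (h ▸ Sym2.mem_mk_right _ _)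
      rw [hpos' a ha, hpos' b hb, hpos' c hc, hpos' d hd] at *
      exact hcross _ he₁ _ he₂ ⟨a, b, c, d, rfl, rfl, by omega, by omega, by omega⟩
    · rcases Sym2.eq_iff.1 he₂ with ⟨rfl, rfl⟩ | ⟨rfl, rfl⟩
      · rw [hpos'x] at hbc; rw [hpos'w] at hcd
        omega
      · rw [hpos'w] at hbc; rw [hpos'x] at hcd
        omega
  · rcases Sym2.eq_iff.1 he₁ with ⟨rfl, rfl⟩ | ⟨rfl, rfl⟩
    · rw [hpos'x] at hab; rw [hpos'w] at hbc
      omega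
    · rw [hpos'w] at hab; rw [hpos'x] at hbc
      omega

/-- A splitting of `G` into two star forests: for each `c : Bool`, the edges whose centre has
colour `c` form stars around their centres. -/
structure StarSplit (G : SimpleGraph V) where
  center : Sym2 V → V
  color : V → Bool
  center_mem : ∀ e ∈ G.edgeSet, center e ∈ e
  color_ne : ∀ e ∈ G.edgeSet, ∀ v ∈ e, v ≠ center e → color v ≠ color (center e)
  eq_of_mem : ∀ e ∈ G.edgeSet, ∀ f ∈ G.edgeSet, ∀ v ∈ e, v ∈ f →
    v ≠ center e → v ≠ center f → e = f

namespace StarSplit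

variable (σ : G.StarSplit) {S : Set (Sym2 V)} {c : Bool}

lemma center_eq_of_mem (hS : S ⊆ G.edgeSet) (hc : ∀ e ∈ S, σ.color (σ.center e) = c)
    {e f : Sym2 V} (he : e ∈ S) (hf : f ∈ S) {z : V} (hze : z ∈ e) (hzf : z ∈ f) :
    σ.center e = σ.center f := by
  by_cases hz₁ : z = σ.center e <;> by_cases hz₂ : z = σ.center f
  · rw [← hz₁, ← hz₂]
  · refine absurd ?_ (σ.color_ne f (hS hf) z hzf hz₂)
    rw [hc f hf, hz₁, hc e he]
  · refine absurd ?_ (σ.color_ne e (hS he) z hze hz₁)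
    rw [hc e he, hz₂, hc f hf]
  · rw [σ.eq_of_mem e (hS he) f (hS hf) z hze hzf hz₁ hz₂]

lemma center_eq_of_reachable (hS : S ⊆ G.edgeSet) (hc : ∀ e ∈ S, σ.color (σ.center e) = c)
    {u v : V} (huv : (fromEdgeSet S).Reachable u v) {e f : Sym2 V} (he : e ∈ S) (hf : f ∈ S)
    (hu : u ∈ e) (hv : v ∈ f) : σ.center e = σ.center f := by
  obtain ⟨p⟩ := huv
  induction p generalizing e with
  | nil => exact σ.center_eq_of_mem hS hc he hf hu hv
  | cons hadj _ ih =>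
    have hS' := (fromEdgeSet_adj _).1 hadj |>.1
    exact (σ.center_eq_of_mem hS hc he hS' hu (Sym2.mem_mk_left _ _)).trans
      (ih hS' (Sym2.mem_mk_right _ _) hv)

end StarSplit

/-- Root each tree, centre each edge at its endpoint nearer the root and colour vertices by the
parity of their depth. -/
theorem IsAcyclic.nonempty_starSplit [Finite V] (hG : G.IsAcyclic) : Nonempty G.StarSplit := by
  refine hG.induction_on_leaf (P := fun G => Nonempty G.StarSplit) ?_
    fun H x w _ hxw hx ⟨σ⟩ => ?_
  · exact ⟨⟨fun e => (Quot.out e).1, fun _ => false, by simp, by simp, by simp⟩⟩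
  classical
  have hx' : ∀ e ∈ H.edgeSet, x ∉ e := fun e he => notMem_of_forall_not_adj hx he
  have hne : ∀ e ∈ H.edgeSet, e ≠ s(x, w) := fun e he h => hx' e he (h ▸ Sym2.mem_mk_left _ _)
  let center : Sym2 V → V := fun e => if e = s(x, w) then w else σ.center e
  let color : V → Bool := fun v => if v = x then !σ.color w else σ.color v
  have hcenter : ∀ e ∈ H.edgeSet, center e = σ.center e := fun e he => if_neg (hne e he)
  have hcolor : ∀ v, v ≠ x → color v = σ.color v := fun v hv => if_neg hv
  have hcenter_xw : center s(x, w) = w := if_pos rfl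
  have hmem_xw : ∀ v ∈ s(x, w), v ≠ w → v = x := fun v hv hvw => by
    rcases Sym2.mem_iff.1 hv with rfl | rfl
    exacts [rfl, absurd rfl hvw]
  refine ⟨⟨center, color, fun e he => ?_, fun e he v hv hvc => ?_,
    fun e he f hf v hve hvf hve' hvf' => ?_⟩⟩
  · rcases (mem_edgeSet_sup_edge hxw).1 he with he | rfl
    · exact hcenter e he ▸ σ.center_mem e he
    · rw [hcenter_xw]
      exact Sym2.mem_mk_right _ _
  · rcases (mem_edgeSet_sup_edge hxw).1 he with he | rfl
    · have hvx : v ≠ x := fun h => hx' e he (h ▸ hv)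
      rw [hcenter e he] at hvc ⊢
      rw [hcolor v hvx, hcolor _ fun h => hx' e he (h ▸ σ.center_mem e he)]
      exact σ.color_ne e he v hv hvc
    · rw [hcenter_xw] at hvc ⊢
      rw [hmem_xw v hv hvc, hcolor w hxw.symm]
      simp [color]
  · rcases (mem_edgeSet_sup_edge hxw).1 he with he | rfl <;>
      rcases (mem_edgeSet_sup_edge hxw).1 hf with hf | rfl
    · rw [hcenter e he] at hve'
      rw [hcenter f hf] at hvf'
      exact σ.eq_of_mem e he f hf v hve hvf hve' hvf'
    · rw [hcenter_xw] at hvf'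
      exact absurd (hmem_xw v hvf hvf' ▸ hve) (hx' e he)
    · rw [hcenter_xw] at hve'
      exact absurd (hmem_xw v hve hve' ▸ hvf) (hx' f hf)
    · rfl

lemma mem_induce_top_edgeSet {U : Set V} {e : Sym2 V} :
    e ∈ ((⊤ : G.Subgraph).induce U).edgeSet ↔ e ∈ G.edgeSet ∧ ∀ v ∈ e, v ∈ U := by
  induction e using Sym2.ind
  simp only [Subgraph.mem_edgeSet, Subgraph.induce_adj, Subgraph.top_adj, mem_edgeSet,
    Sym2.mem_iff, forall_eq_or_imp, forall_eq]
  tauto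

lemma two_mul_ncard_induce_edgeSet_le [Finite V] (U : Set V) :
    2 * ((⊤ : G.Subgraph).induce U).edgeSet.ncard ≤ U.ncard * (U.ncard - 1) := by
  have hsub : ((⊤ : G.Subgraph).induce U).edgeSet ⊆
      Sym2.map ((↑) : U → V) '' (Sym2.diagSet : Set (Sym2 U))ᶜ := by
    intro e he
    induction e using Sym2.ind with | _ a b => ?_
    obtain ⟨hab, hU⟩ := mem_induce_top_edgeSet.1 he
    refine ⟨s(⟨a, hU a (Sym2.mem_mk_left _ _)⟩, ⟨b, hU b (Sym2.mem_mk_right _ _)⟩), ?_, rfl⟩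
    simpa [Sym2.mem_diagSet] using G.ne_of_adj hab
  calc 2 * ((⊤ : G.Subgraph).induce U).edgeSet.ncard
      ≤ 2 * (Nat.card U).choose 2 := by
        rw [← Sym2.ncard_diagSet_compl, ← Set.ncard_image_of_injective _
          (Sym2.map.injective Subtype.val_injective)]
        exact Nat.mul_le_mul_left 2 (Set.ncard_le_ncard hsub)
    _ = U.ncard * (U.ncard - 1) := by
        rw [Nat.card_coe_set_eq, Nat.choose_two_right,
          Nat.two_mul_div_two_of_even (Nat.even_mul_pred_self _)]

structure IsForestPacking (G : SimpleGraph V) (F : Fin k → SimpleGraph V) : Prop where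
  le : ∀ i, F i ≤ G
  pairwise_disjoint : Pairwise fun i j => Disjoint (F i) (F j)
  isAcyclic : ∀ i, (F i).IsAcyclic

noncomputable def edgeCount (F : Fin k → SimpleGraph V) : ℕ := ∑ i, (F i).edgeSet.ncard

lemma edgeCount_update (F : Fin k → SimpleGraph V) (i : Fin k) (H : SimpleGraph V) :
    edgeCount (Function.update F i H) + (F i).edgeSet.ncard = edgeCount F + H.edgeSet.ncard := by
  have hupd : ∀ j, (Function.update F i H j).edgeSet.ncard =
      Function.update (fun j => (F j).edgeSet.ncard) i H.edgeSet.ncard j := fun j => by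
    rcases eq_or_ne j i with rfl | hj <;> simp [*]
  simp only [edgeCount, hupd, Finset.sum_update_of_mem (Finset.mem_univ i),
    Finset.sum_eq_add_sum_sdiff_singleton_of_mem (Finset.mem_univ i) (fun j => (F j).edgeSet.ncard)]
  ring

namespace IsForestPacking

variable {F : Fin k → SimpleGraph V} {i j : Fin k}

lemma not_adj_of_adj (hF : IsForestPacking G F) (hij : i ≠ j) (h : (F i).Adj a b) :
    ¬(F j).Adj a b :=
  fun h' => (hF.pairwise_disjoint hij).le_bot ⟨h, h'⟩

lemma update (hF : IsForestPacking G F) {H : SimpleGraph V} (hHG : H ≤ G) (hH : H.IsAcyclic)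
    (hdisj : ∀ j ≠ i, Disjoint H (F j)) : IsForestPacking G (Function.update F i H) := by
  refine ⟨fun j => ?_, fun j l hjl => ?_, fun j => ?_⟩
  · rcases eq_or_ne j i with rfl | hj
    · simpa using hHG
    · simpa [hj] using hF.le j
  · rcases eq_or_ne j i with rfl | hj <;> rcases eq_or_ne l j with rfl | hl
    · exact absurd rfl hjl
    · simpa [hjl.symm] using hdisj l hjl.symm
    · exact absurd rfl hjl
    · rcases eq_or_ne l i with rfl | hli
      · simpa [hj] using (hdisj j hj).symm
      · simpa [hj, hli] using hF.pairwise_disjoint hjl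
  · rcases eq_or_ne j i with rfl | hj
    · simpa using hH
    · simpa [hj] using hF.isAcyclic j

lemma update_sup_edge (hF : IsForestPacking G F) (hxy : G.Adj x y) (hout : ∀ j, ¬(F j).Adj x y)
    {H : SimpleGraph V} (hHF : H ≤ F i) (hH : (H ⊔ edge x y).IsAcyclic) :
    IsForestPacking G (Function.update F i (H ⊔ edge x y)) :=
  hF.update (sup_le (hHF.trans (hF.le i)) ((edge_le_iff _).2 (Or.inr hxy))) hH fun j hj =>
    disjoint_sup_left.2 ⟨(hF.pairwise_disjoint hj.symm).mono_left hHF,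
      ((disjoint_edge _).2 (hout j)).symm⟩

end IsForestPacking

structure IsMaxPackingMissing (G : SimpleGraph V) (F : Fin k → SimpleGraph V) (x y : V) : Prop
    extends IsForestPacking G F where
  edgeCount_le : ∀ F' : Fin k → SimpleGraph V, IsForestPacking G F' → edgeCount F' ≤ edgeCount F
  adj : G.Adj x y
  not_adj : ∀ i, ¬(F i).Adj x y

namespace IsMaxPackingMissing

variable {F : Fin k → SimpleGraph V}

lemma reachable [Finite V] (hF : IsMaxPackingMissing G F x y) (i : Fin k) :
    (F i).Reachable x y := by
  by_contra hr
  have hmax := hF.edgeCount_le _ (hF.update_sup_edge hF.adj hF.not_adj le_rfl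
    ((hF.isAcyclic i).sup_edge_of_not_reachable hr))
  have hcount := edgeCount_update F i (F i ⊔ edge x y)
  rw [edgeSet_sup, edgeSet_edge_of_ne hF.adj.ne, Set.union_singleton,
    Set.ncard_insert_of_notMem (show s(x, y) ∉ (F i).edgeSet from hF.not_adj i)] at hcount
  omega

lemma exchange [Finite V] (hF : IsMaxPackingMissing G F x y) {i : Fin k} (hab : (F i).Adj a b)
    (hsep : ¬((F i).deleteEdges {s(a, b)}).Reachable x y) :
    IsMaxPackingMissing G (Function.update F i ((F i).deleteEdges {s(a, b)} ⊔ edge x y)) a b := by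
  have hpack := hF.update_sup_edge hF.adj hF.not_adj (deleteEdges_le _)
    (((hF.isAcyclic i).anti (deleteEdges_le _)).sup_edge_of_not_reachable hsep)
  have hcount := edgeCount_update F i ((F i).deleteEdges {s(a, b)} ⊔ edge x y)
  rw [edgeSet_sup, edgeSet_edge_of_ne hF.adj.ne, Set.union_singleton,
    Set.ncard_insert_of_notMem fun h => hF.not_adj i (edgeSet_deleteEdges _ ▸ h).1,
    edgeSet_deleteEdges, Set.ncard_sdiff_singleton_of_mem (show s(a, b) ∈ (F i).edgeSet from hab)]
    at hcount
  have hpos : 0 < (F i).edgeSet.ncard := (Set.ncard_pos (Set.toFinite _)).2 ⟨s(a, b), hab⟩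
  refine ⟨hpack, fun F' hF' => ?_, hF.le i hab, fun j hj => ?_⟩
  · have := hF.edgeCount_le F' hF'
    omega
  · rcases eq_or_ne j i with rfl | hji
    · simp only [Function.update_self, sup_adj, deleteEdges_adj, Set.mem_singleton_iff,
        not_true_eq_false, and_false, false_or] at hj
      obtain ⟨he, -⟩ := (edge_adj _ _ _ _).1 hj
      rcases he with ⟨rfl, rfl⟩ | ⟨rfl, rfl⟩
      exacts [hF.not_adj j hab, hF.not_adj j hab.symm]
    · rw [Function.update_of_ne hji] at hj
      exact hF.not_adj_of_adj hji.symm hab hj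

end IsMaxPackingMissing

/-- The packings, each with a missed edge `xy`, reached from `F₀` missing `x₀y₀` by repeatedly
swapping the missed edge into a forest in place of an edge that separates its ends there. -/
inductive Exchange (F₀ : Fin k → SimpleGraph V) (x₀ y₀ : V) :
    (Fin k → SimpleGraph V) → V → V → Prop
  | refl : Exchange F₀ x₀ y₀ F₀ x₀ y₀
  | swap {F : Fin k → SimpleGraph V} {x y : V} (i : Fin k) {a b : V} :
      Exchange F₀ x₀ y₀ F x y → (F i).Adj a b → ¬((F i).deleteEdges {s(a, b)}).Reachable x y →
      Exchange F₀ x₀ y₀ (Function.update F i ((F i).deleteEdges {s(a, b)} ⊔ edge x y)) a b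

def missedEdges (F₀ : Fin k → SimpleGraph V) (x₀ y₀ : V) : Set (Sym2 V) :=
  {e | ∃ F x y, Exchange F₀ x₀ y₀ F x y ∧ e = s(x, y)}

namespace Exchange

variable {F₀ F : Fin k → SimpleGraph V} {x₀ y₀ : V}

lemma adj_missedEdges (h : Exchange F₀ x₀ y₀ F x y) (hxy : x ≠ y) :
    (fromEdgeSet (missedEdges F₀ x₀ y₀)).Adj x y :=
  (fromEdgeSet_adj _).2 ⟨⟨F, x, y, h, rfl⟩, hxy⟩

variable [Finite V]

lemma isMaxPackingMissing (h₀ : IsMaxPackingMissing G F₀ x₀ y₀)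
    (h : Exchange F₀ x₀ y₀ F x y) : IsMaxPackingMissing G F x y := by
  induction h with
  | refl => exact h₀
  | swap i _ hab hsep ih => exact ih.exchange hab hsep

/-- The path joining the ends of the missed edge in a forest consists of edges that can be
missed next. -/
lemma reachable_inf_missedEdges (h₀ : IsMaxPackingMissing G F₀ x₀ y₀)
    (h : Exchange F₀ x₀ y₀ F x y) (i : Fin k) :
    (F i ⊓ fromEdgeSet (missedEdges F₀ x₀ y₀)).Reachable x y := by
  have hF := h.isMaxPackingMissing h₀
  obtain ⟨p, hp⟩ := (hF.reachable i).exists_isPath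
  refine ⟨p.transfer _ fun e he => ?_⟩
  induction e using Sym2.ind with | _ a b => ?_
  have hab : (F i).Adj a b := p.adj_of_mem_edges he
  exact ⟨hab, (h.swap i hab ((hF.isAcyclic i).not_reachable_deleteEdges_of_mem_edges hp he))
    |>.adj_missedEdges hab.ne⟩

lemma reachable_inf_missedEdges_eq (h₀ : IsMaxPackingMissing G F₀ x₀ y₀)
    (h : Exchange F₀ x₀ y₀ F x y) (i : Fin k) :
    (F i ⊓ fromEdgeSet (missedEdges F₀ x₀ y₀)).Reachable =
      (F₀ i ⊓ fromEdgeSet (missedEdges F₀ x₀ y₀)).Reachable := by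
  induction h with
  | refl => rfl
  | @swap F x y j a b h hab hsep ih =>
    rcases eq_or_ne i j with rfl | hij
    · have hxy := h.adj_missedEdges (h.isMaxPackingMissing h₀).adj.ne
      have hab' := (h.swap i hab hsep).adj_missedEdges hab.ne
      have heq : ((F i).deleteEdges {s(a, b)} ⊔ edge x y) ⊓ fromEdgeSet (missedEdges F₀ x₀ y₀) =
          (F i ⊓ fromEdgeSet (missedEdges F₀ x₀ y₀)).deleteEdges {s(a, b)} ⊔ edge x y := by
        rw [deleteEdges, deleteEdges, inf_sup_right, inf_eq_left.2 ((edge_le_iff _).2 (Or.inr hxy)),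
          sdiff_inf_right_comm]
      rw [Function.update_self, heq, reachable_deleteEdges_sup_edge
        (h.reachable_inf_missedEdges h₀ i) ⟨hab, hab'⟩
        fun hr => hsep (hr.mono (deleteEdges_mono inf_le_left)), ih]
    · rw [Function.update_of_ne hij, ih]

lemma reachable_missedEdges (h₀ : IsMaxPackingMissing G F₀ x₀ y₀)
    (h : Exchange F₀ x₀ y₀ F x y) : (fromEdgeSet (missedEdges F₀ x₀ y₀)).Reachable x₀ x := by
  induction h with
  | refl => rfl
  | @swap F x y i a b h hab hsep ih =>
    have hle : (F i ⊓ fromEdgeSet (missedEdges F₀ x₀ y₀)).deleteEdges {s(a, b)} ≤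
        fromEdgeSet (missedEdges F₀ x₀ y₀) := (deleteEdges_le _).trans inf_le_right
    rcases (h.reachable_inf_missedEdges h₀ i).deleteEdges_or a b with hr | ⟨hxa, -⟩ | ⟨hxb, -⟩
    · exact absurd (hr.mono (deleteEdges_mono inf_le_left)) hsep
    · exact ih.trans (hxa.mono hle)
    · exact ih.trans ((hxb.mono hle).trans
        ((h.swap i hab hsep).adj_missedEdges hab.ne).reachable.symm)

end Exchange

/-- The missed edges span a set `U` of vertices that every forest connects through missed edges,
so `G[U]` has at least `k (|U| - 1) + 1` edges. -/
lemma IsMaxPackingMissing.false_of_sparse [Finite V] {F₀ : Fin k → SimpleGraph V} {x₀ y₀ : V}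
    (h₀ : IsMaxPackingMissing G F₀ x₀ y₀)
    (hsparse : ∀ U : Set V, ((⊤ : G.Subgraph).induce U).edgeSet.ncard ≤ k * (U.ncard - 1)) :
    False := by
  set D := missedEdges F₀ x₀ y₀
  set U := {v | (fromEdgeSet D).Reachable x₀ v}
  have hDU : D ⊆ ((⊤ : G.Subgraph).induce U).edgeSet := by
    rintro _ ⟨F, x, y, h, rfl⟩
    have hxy := (h.isMaxPackingMissing h₀).adj
    have hx : x ∈ U := h.reachable_missedEdges h₀
    refine mem_induce_top_edgeSet.2 ⟨hxy, fun v hv => ?_⟩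
    rcases Sym2.mem_iff.1 hv with rfl | rfl
    exacts [hx, hx.trans (h.adj_missedEdges hxy.ne).reachable]
  have hspan : ∀ i, ∀ u ∈ U, ∀ v ∈ U, (F₀ i ⊓ fromEdgeSet D).Reachable u v := by
    intro i u hu v hv
    refine .of_forall_adj (fun a b hab => ?_) (hu.symm.trans hv)
    obtain ⟨⟨F, x, y, h, he⟩, -⟩ := (fromEdgeSet_adj _).1 hab
    have hxy := h.reachable_inf_missedEdges_eq h₀ i ▸ h.reachable_inf_missedEdges h₀ i
    rcases Sym2.eq_iff.1 he with ⟨rfl, rfl⟩ | ⟨rfl, rfl⟩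
    exacts [hxy, hxy.symm]
  have hsum : ∑ i, (F₀ i ⊓ fromEdgeSet D).edgeSet.ncard ≤ (D \ {s(x₀, y₀)}).ncard := by
    rw [← finsum_eq_sum_of_fintype, ← Set.ncard_iUnion_of_finite (fun _ => Set.toFinite _)
      fun i j hij => disjoint_edgeSet.2 ((h₀.pairwise_disjoint hij).mono inf_le_left inf_le_left)]
    refine Set.ncard_le_ncard (Set.iUnion_subset fun i e he => ?_) (Set.toFinite _)
    rw [edgeSet_inf, edgeSet_fromEdgeSet] at he
    refine ⟨he.2.1, fun h => h₀.not_adj i ?_⟩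
    rw [Set.mem_singleton_iff.1 h] at he
    exact he.1
  have hcard : (D \ {s(x₀, y₀)}).ncard + 1 = D.ncard :=
    Set.ncard_sdiff_singleton_add_one ⟨F₀, x₀, y₀, .refl, rfl⟩
  have hle : ∑ _i : Fin k, (U.ncard - 1) ≤ ∑ i, (F₀ i ⊓ fromEdgeSet D).edgeSet.ncard :=
    Finset.sum_le_sum fun i _ => by
      have := ncard_le_ncard_edgeSet_add_one (hspan i)
      omega
  rw [Finset.sum_const, Finset.card_univ, Fintype.card_fin, smul_eq_mul] at hle
  have := (Set.ncard_le_ncard hDU (Set.toFinite _)).trans (hsparse U)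
  omega

/-- Nash-Williams' theorem: a maximum packing of `k` forests in a sparse graph covers every
edge. -/
theorem exists_isAcyclic_le_iSup_of_sparse [Finite V]
    (hsparse : ∀ U : Set V, ((⊤ : G.Subgraph).induce U).edgeSet.ncard ≤ k * (U.ncard - 1)) :
    ∃ F : Fin k → SimpleGraph V, (∀ i, (F i).IsAcyclic) ∧ G ≤ ⨆ i, F i := by
  obtain ⟨F, hF, hmax⟩ := Set.exists_max_image {F : Fin k → SimpleGraph V | IsForestPacking G F}
    edgeCount (Set.toFinite _)
    ⟨fun _ => ⊥, fun _ => bot_le, fun _ _ _ => disjoint_bot_left, fun _ => isAcyclic_bot⟩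
  refine ⟨F, hF.isAcyclic, fun x y hxy => ?_⟩
  by_contra hout
  exact IsMaxPackingMissing.false_of_sparse ⟨hF, hmax, hxy, fun i h => hout (le_iSup F i h)⟩
    hsparse

end SimpleGraph

section MaximumAverageDegree

variable {V : Type*} {G : SimpleGraph V}

lemma mad_nonneg (G : SimpleGraph V) : 0 ≤ mad G :=
  Real.sSup_nonneg (by rintro _ ⟨H, -, rfl⟩; positivity)

lemma bddAbove_mad [Finite V] (G : SimpleGraph V) :
    BddAbove {x : ℝ | ∃ H : G.Subgraph, H.verts.Nonempty ∧
      x = 2 * H.edgeSet.ncard / H.verts.ncard} := by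
  refine ⟨2 * Nat.card (Sym2 V), ?_⟩
  rintro _ ⟨H, hne, rfl⟩
  have hV : (1 : ℝ) ≤ H.verts.ncard := by exact_mod_cast (Set.ncard_pos (Set.toFinite _)).2 hne
  have hE : (H.edgeSet.ncard : ℝ) ≤ Nat.card (Sym2 V) := by exact_mod_cast Set.ncard_le_card _
  calc 2 * (H.edgeSet.ncard : ℝ) / H.verts.ncard ≤ 2 * H.edgeSet.ncard :=
        div_le_self (by positivity) hV
    _ ≤ 2 * Nat.card (Sym2 V) := by linarith

lemma two_mul_ncard_edgeSet_le_mad [Finite V] (H : G.Subgraph) :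
    2 * (H.edgeSet.ncard : ℝ) ≤ mad G * H.verts.ncard := by
  rcases H.verts.eq_empty_or_nonempty with hV | hV
  · have : H.edgeSet = ∅ := Set.eq_empty_of_forall_notMem fun e he => by
      induction e using Sym2.ind with | _ a b => exact hV.subset (H.edge_vert he)
    simp [this, hV]
  have hpos : (0 : ℝ) < H.verts.ncard := by exact_mod_cast (Set.ncard_pos (Set.toFinite _)).2 hV
  rw [← div_le_iff₀ hpos]
  exact le_csSup (bddAbove_mad G) ⟨H, hV, rfl⟩

lemma ncard_induce_edgeSet_le_of_mad_le [Finite V] {k : ℕ} (hk : mad G ≤ 2 * k) (U : Set V) :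
    ((⊤ : G.Subgraph).induce U).edgeSet.ncard ≤ k * U.ncard := by
  have h := two_mul_ncard_edgeSet_le_mad ((⊤ : G.Subgraph).induce U)
  have : mad G * U.ncard ≤ 2 * k * U.ncard := by gcongr
  have : (((⊤ : G.Subgraph).induce U).edgeSet.ncard : ℝ) ≤ k * U.ncard := by
    simp only [Subgraph.induce_verts] at h; linarith
  exact_mod_cast this

/-- Small vertex sets are handled by the complete graph bound, large ones by the density. -/
lemma ncard_induce_edgeSet_le_of_mad_lt [Finite V] {k : ℕ} (hk : mad G + 1 < 2 * k)
    (U : Set V) : ((⊤ : G.Subgraph).induce U).edgeSet.ncard ≤ k * (U.ncard - 1) := by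
  set m := ((⊤ : G.Subgraph).induce U).edgeSet.ncard
  set n := U.ncard
  rcases le_or_gt n (2 * k) with hn | hn
  · have h₁ : 2 * m ≤ n * (n - 1) := two_mul_ncard_induce_edgeSet_le U
    have h₂ : n * (n - 1) ≤ 2 * k * (n - 1) := Nat.mul_le_mul_right _ hn
    rw [mul_assoc] at h₂
    omega
  · have h := two_mul_ncard_edgeSet_le_mad ((⊤ : G.Subgraph).induce U)
    simp only [Subgraph.induce_verts] at h
    have hnpos : (0 : ℝ) < n := by exact_mod_cast (show 0 < n by omega)
    have : (2 * m + n : ℝ) < 2 * (k * n) := by nlinarith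
    have : 2 * m + n < 2 * (k * n) := by exact_mod_cast this
    rw [Nat.mul_sub_one]
    have : k ≤ k * n := Nat.le_mul_of_pos_right k (by omega)
    omega

end MaximumAverageDegree

section LocalPageNumber

variable {V : Type*} {G : SimpleGraph V}

/-- Each vertex offers `k` slots; by Hall's theorem every edge gets a private slot at one of its
endpoints. -/
lemma exists_injective_slot [Finite V] {k : ℕ}
    (hG : ∀ U : Set V, ((⊤ : G.Subgraph).induce U).edgeSet.ncard ≤ k * U.ncard) :
    ∃ f : G.edgeSet → V × Fin k, Function.Injective f ∧
      ∀ e : G.edgeSet, (f e).1 ∈ (e : Sym2 V) := by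
  classical
  have := Fintype.ofFinite V
  let slots : G.edgeSet → Finset (V × Fin k) := fun e =>
    (Finset.univ.filter (· ∈ (e : Sym2 V))) ×ˢ Finset.univ
  refine ((Finset.all_card_le_biUnion_card_iff_exists_injective slots).1 fun s => ?_).imp
    fun f hf => ⟨hf.1, fun e => by simpa [slots] using hf.2 e⟩
  set S : Finset V := s.biUnion fun e => Finset.univ.filter (· ∈ (e : Sym2 V))
  have hslots : s.biUnion slots = S ×ˢ Finset.univ := by ext ⟨v, i⟩; simp [slots, S]
  have hsub : Subtype.val '' (s : Set G.edgeSet) ⊆ ((⊤ : G.Subgraph).induce S).edgeSet := by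
    rintro _ ⟨e, he, rfl⟩
    exact mem_induce_top_edgeSet.2 ⟨e.2, fun v hv => by simpa [S] using ⟨e, ⟨e.2, he⟩, hv⟩⟩
  calc s.card = (Subtype.val '' (s : Set G.edgeSet)).ncard := by
        rw [Set.ncard_image_of_injective _ Subtype.val_injective, Set.ncard_coe_finset]
    _ ≤ _ := Set.ncard_le_ncard hsub
    _ ≤ k * (S : Set V).ncard := hG _
    _ = (s.biUnion slots).card := by
        rw [hslots, Finset.card_product, Set.ncard_coe_finset, Finset.card_univ,
          Fintype.card_fin, mul_comm]

/-- Hakimi's orientation theorem. -/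
theorem exists_orientation_of_sparse [Finite V] {k : ℕ}
    (hG : ∀ U : Set V, ((⊤ : G.Subgraph).induce U).edgeSet.ncard ≤ k * U.ncard) :
    ∃ head : Sym2 V → V, (∀ e, head e ∈ e) ∧
      ∀ v, {e | e ∈ G.edgeSet ∧ head e = v}.ncard ≤ k := by
  classical
  obtain ⟨f, hf, hfmem⟩ := exists_injective_slot hG
  let head : Sym2 V → V := fun e => if h : e ∈ G.edgeSet then (f ⟨e, h⟩).1 else (Quot.out e).1
  refine ⟨head, fun e => ?_, fun v => ?_⟩
  · unfold head
    split_ifs with he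
    exacts [hfmem ⟨e, he⟩, Sym2.out_fst_mem e]
  have hin : {e | e ∈ G.edgeSet ∧ head e = v} = Subtype.val '' {e : G.edgeSet | (f e).1 = v} := by
    ext e
    constructor
    · rintro ⟨he, rfl⟩
      exact ⟨⟨e, he⟩, by simp [head, dif_pos he], rfl⟩
    · rintro ⟨e, rfl, rfl⟩
      exact ⟨e.2, by simp [head, dif_pos e.2]⟩
  rw [hin, Set.ncard_image_of_injective _ Subtype.val_injective]
  calc _ ≤ (Set.univ : Set (Fin k)).ncard :=
        Set.ncard_le_ncard_of_injOn (fun e => (f e).2) (fun _ _ => Set.mem_univ _)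
          fun a ha b hb hab => hf (Prod.ext (ha.trans hb.symm) hab)
    _ = k := by simp

theorem pnLoc_le_of_orientation [Finite V] {k : ℕ} (head : Sym2 V → V) (hhead : ∀ e, head e ∈ e)
    (hin : ∀ v, {e | e ∈ G.edgeSet ∧ head e = v}.ncard ≤ k) : pnLoc G ≤ k + 1 := by
  obtain ⟨pos, hpos⟩ := exists_injective_nat V
  let tail : Sym2 V → V := fun e => Sym2.Mem.other (hhead e)
  have htail : ∀ e, tail e ∈ e := fun e => Sym2.other_mem (hhead e)
  have hmem : ∀ e, ∀ v ∈ e, v = head e ∨ v = tail e := fun e v hv => by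
    rwa [← Sym2.other_spec (hhead e), Sym2.mem_iff] at hv
  let L : LinearEmbedding G := ⟨pos, hpos, fun e => pos (tail e)⟩
  refine Nat.sInf_le ⟨L, fun e₁ _ e₂ _ h => not_crosses_of_mem (htail e₁) (hpos h ▸ htail e₂),
    fun v => ?_⟩
  have hsub : L.pagesAt v ⊆
      insert (pos v) ((fun e => pos (tail e)) '' {e | e ∈ G.edgeSet ∧ head e = v}) := by
    rintro _ ⟨e, he, hve, rfl⟩
    rcases hmem e v hve with h | h
    · exact Or.inr ⟨e, ⟨he, h.symm⟩, rfl⟩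
    · exact Or.inl (by simp [L, h])
  calc (L.pagesAt v).ncard ≤ _ := Set.ncard_le_ncard hsub (Set.toFinite _)
    _ ≤ _ + 1 := Set.ncard_insert_le _ _
    _ ≤ k + 1 := Nat.add_le_add_right ((Set.ncard_image_le (Set.toFinite _)).trans (hin v)) 1

end LocalPageNumber

lemma LinearEmbedding.pageCount_le_card {V : Type*} {G : SimpleGraph V} (L : LinearEmbedding G)
    {s : Finset ℕ} (hs : ∀ e ∈ G.edgeSet, L.page e ∈ s) : L.pageCount ≤ s.card := by
  rw [← Set.ncard_coe_finset]
  exact Set.ncard_le_ncard (by rintro _ ⟨e, he, rfl⟩; exact hs e he) (Finset.finite_toSet _)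

lemma SimpleGraph.exists_mem_edgeSet_of_le_iSup {V ι : Type*} [Nonempty ι] {G : SimpleGraph V}
    {F : ι → SimpleGraph V} (hGF : G ≤ ⨆ i, F i) :
    ∃ col : Sym2 V → ι, ∀ e ∈ G.edgeSet, e ∈ (F (col e)).edgeSet := by
  have hcover : ∀ e ∈ G.edgeSet, ∃ i, e ∈ (F i).edgeSet := fun e he => by
    simpa [edgeSet_iSup] using edgeSet_mono hGF he
  choose! col hcol using hcover
  exact ⟨col, hcol⟩

lemma Bool.toNat_injective : Function.Injective Bool.toNat := by
  intro a b
  cases a <;> cases b <;> simp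

theorem pnUnion_le_of_le_iSup {V : Type*} [Finite V] {G : SimpleGraph V} {k : ℕ}
    (F : Fin (k + 1) → SimpleGraph V) (hF : ∀ i, (F i).IsAcyclic) (hGF : G ≤ ⨆ i, F i) :
    pnUnion G ≤ 2 * k + 1 := by
  obtain ⟨col, hcol⟩ := exists_mem_edgeSet_of_le_iSup hGF
  obtain ⟨pos, hpos, hcross⟩ := (hF 0).exists_pos_not_crosses
  let σ : ∀ i, (F i).StarSplit := fun i => Classical.choice (hF i).nonempty_starSplit
  let color : Fin (k + 1) → Sym2 V → Bool := fun i e => (σ i).color ((σ i).center e)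
  let bit : Sym2 V → ℕ := fun e => if col e = 0 then 0 else (color (col e) e).toNat
  have hbit : ∀ e, bit e ≤ 1 := fun e => by
    unfold bit; split_ifs
    exacts [zero_le_one, Bool.toNat_le _]
  have hbit0 : ∀ e, (col e : ℕ) = 0 → bit e = 0 := fun e h => if_pos (Fin.ext h)
  let L : LinearEmbedding G := ⟨pos, hpos, fun e => 2 * col e + bit e⟩
  have hpage : ∀ e f, L.page e = L.page f → col e = col f ∧ bit e = bit f := fun e f h => by
    have := hbit e; have := hbit f
    exact ⟨Fin.ext (by simp only [L] at h; omega), by simp only [L] at h; omega⟩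
  refine Nat.sInf_le ⟨L, ?_, ?_⟩
  · rintro e₁ h₁ e₂ h₂ h ⟨u, v, hu, hv, huv⟩
    obtain ⟨hc, hb⟩ := hpage e₁ e₂ h
    by_cases h0 : col e₁ = 0
    · exact hcross e₁ (h0 ▸ hcol e₁ h₁) e₂ (h0 ▸ hc ▸ hcol e₂ h₂)
    have hS : {e | e ∈ G.edgeSet ∧ L.page e = L.page e₁} ⊆ (F (col e₁)).edgeSet :=
      fun e ⟨he, hpe⟩ => (hpage e e₁ hpe).1 ▸ hcol e he
    have hcolor : ∀ e ∈ {e | e ∈ G.edgeSet ∧ L.page e = L.page e₁},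
        color (col e₁) e = color (col e₁) e₁ := fun e ⟨_, hpe⟩ => by
      obtain ⟨hce, hbe⟩ := hpage e e₁ hpe
      simp only [bit, hce, if_neg h0] at hbe
      exact Bool.toNat_injective hbe
    have := (σ (col e₁)).center_eq_of_reachable hS hcolor huv ⟨h₁, rfl⟩ ⟨h₂, h.symm⟩ hu hv
    exact not_crosses_of_mem ((σ _).center_mem e₁ (hcol e₁ h₁))
      (this ▸ (σ _).center_mem e₂ (hc ▸ hcol e₂ h₂))
  · refine (L.pageCount_le_card (s := (Finset.range (2 * k + 2)).erase 1) fun e _ => ?_).trans_eq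
      (by rw [Finset.card_erase_of_mem (by simp), Finset.card_range]; rfl)
    have := hbit e
    have := (col e).isLt
    have := hbit0 e
    simp only [Finset.mem_erase, Finset.mem_range, L]
    omega

theorem pn_upper_bounds_from_mad_general {V : Type*} [Fintype V]
    (G : SimpleGraph V) :
    (pnLoc G : ℝ) ≤ mad G / 2 + 2 ∧ (pnUnion G : ℝ) ≤ mad G + 2 := by
  have hmad := mad_nonneg G
  constructor
  · set k := ⌈mad G / 2⌉₊
    have hk : mad G ≤ 2 * k := by linarith [Nat.le_ceil (mad G / 2)]
    obtain ⟨head, hhead, hin⟩ := exists_orientation_of_sparse (ncard_induce_edgeSet_le_of_mad_le hk)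
    have hpn : (pnLoc G : ℝ) ≤ k + 1 := by exact_mod_cast pnLoc_le_of_orientation head hhead hin
    linarith [Nat.ceil_lt_add_one (by positivity : 0 ≤ mad G / 2)]
  · set k := ⌊(mad G + 1) / 2⌋₊
    have hk : mad G + 1 < 2 * ((k + 1 : ℕ) : ℝ) := by
      push_cast; linarith [Nat.lt_floor_add_one ((mad G + 1) / 2)]
    obtain ⟨F, hF, hGF⟩ := exists_isAcyclic_le_iSup_of_sparse (ncard_induce_edgeSet_le_of_mad_lt hk)
    have hpn : (pnUnion G : ℝ) ≤ 2 * k + 1 := by exact_mod_cast pnUnion_le_of_le_iSup F hF hGF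
    linarith [Nat.floor_le (by positivity : 0 ≤ (mad G + 1) / 2)]

/-- `pnℓ(G) ≤ mad(G)/2 + 2` and `pnᵤ(G) ≤ mad(G) + 2`. -/
theorem pn_upper_bounds_from_mad {V : Type*} [Fintype V] [Nonempty V]
    (G : SimpleGraph V) :
    (pnLoc G : ℝ) ≤ mad G / 2 + 2 ∧ (pnUnion G : ℝ) ≤ mad G + 2 :=
  pn_upper_bounds_from_mad_general G
end

section
/- Every k-regular graph G satisfies pn_ℓ(G) ≤ k and pn_u(G) ≤ k + 2. -/
open SimpleGraph

/-! Local bound: put every edge on a page of its own; a vertex then meets at most `deg v` pages.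

Union bound: number the vertices and colour the edges greedily in the order of their right
endpoints, each edge avoiding the colours of the earlier edges it meets. The earlier edges meeting
`ab`, with `a` left of `b`, all pass through `a`, so fewer than `deg a` colours are blocked. Two
edges of one colour that meet have the same right endpoint, hence so do any two edges of one
connected component of a colour class: they share a vertex and cannot cross. -/

section

variable {V : Type*}

theorem not_crosses_of_mem_of_mem {pos : V → ℕ} {e₁ e₂ : Sym2 V} {x : V}
    (h₁ : x ∈ e₁) (h₂ : x ∈ e₂) : ¬ Crosses pos e₁ e₂ := by
  rintro ⟨a, b, c, d, rfl, rfl, hab, hbc, hcd⟩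
  rcases Sym2.mem_iff.mp h₁ with rfl | rfl <;> rcases Sym2.mem_iff.mp h₂ with rfl | rfl <;> omega

section Greedy

variable {α : Type*} (r : α → α → Prop) (rank : α → ℕ)

noncomputable def greedyColor (a : α) : ℕ :=
  sInf {n | ∀ b, r a b → rank b < rank a → greedyColor b ≠ n}
termination_by rank a
decreasing_by assumption

theorem greedyColor_eq_sInf (a : α) :
    greedyColor r rank a = sInf (greedyColor r rank '' {b | r a b ∧ rank b < rank a})ᶜ := by
  rw [greedyColor]
  congr 1
  ext n
  simp only [Set.mem_ofPred_eq, Set.mem_compl_iff, Set.mem_image, not_exists, not_and, and_imp]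

variable {r rank}

theorem greedyColor_ne {a b : α} (hfin : {b | r a b}.Finite)
    (hab : r a b) (hlt : rank b < rank a) : greedyColor r rank b ≠ greedyColor r rank a := by
  have hearlier : {b | r a b ∧ rank b < rank a}.Finite := hfin.subset fun _ => And.left
  have hmem := Nat.sInf_mem (hearlier.image (greedyColor r rank)).infinite_compl.nonempty
  rw [← greedyColor_eq_sInf] at hmem
  exact fun h => hmem ⟨b, ⟨hab, hlt⟩, h⟩

theorem greedyColor_lt {a : α} {k : ℕ} (hfin : {b | r a b}.Finite)
    (hk : {b | r a b ∧ rank b < rank a}.ncard < k) : greedyColor r rank a < k := by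
  replace hfin : {b | r a b ∧ rank b < rank a}.Finite := hfin.subset fun _ => And.left
  set used := greedyColor r rank '' {b | r a b ∧ rank b < rank a}
  have hused : used.ncard < k := (Set.ncard_image_le hfin).trans_lt hk
  obtain ⟨n, hnk, hn⟩ : ∃ n < k, n ∉ used := by
    by_contra! h
    have := Set.ncard_le_ncard (fun n (hn : n ∈ Set.Iio k) => h n hn) (hfin.image _)
    rw [Set.ncard_Iio_nat] at this
    omega
  rw [greedyColor_eq_sInf]
  exact (Nat.sInf_le hn).trans_lt hnk

end Greedy

theorem Sym2.exists_mem_eq_sup_map {α β : Type*} [LinearOrder β] (f : α → β) (e : Sym2 α) :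
    ∃ x ∈ e, f x = (e.map f).sup := by
  induction e using Sym2.ind with
  | _ a b =>
    rcases le_total (f a) (f b) with h | h
    · exact ⟨b, Sym2.mem_mk_right a b, by simp [h]⟩
    · exact ⟨a, Sym2.mem_mk_left a b, by simp [h]⟩

theorem Sym2.le_sup_map {α β : Type*} [SemilatticeSup β] {f : α → β} {e : Sym2 α} {x : α}
    (hx : x ∈ e) : f x ≤ (e.map f).sup := by
  induction e using Sym2.ind with
  | _ a b => rcases Sym2.mem_iff.mp hx with rfl | rfl <;> simp

namespace SimpleGraph

variable (G : SimpleGraph V)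

theorem ncard_incidenceSet [G.LocallyFinite] (v : V) : (G.incidenceSet v).ncard = G.degree v := by
  classical
  rw [← coe_incidenceFinset, Set.ncard_coe_finset, card_incidenceFinset_eq_degree]

theorem finite_setOf_mem_edgeSet_exists_mem [G.LocallyFinite] (e : Sym2 V) :
    {f | f ∈ G.edgeSet ∧ ∃ x ∈ e, x ∈ f}.Finite := by
  classical
  induction e using Sym2.ind with
  | _ a b =>
    refine ((G.incidenceSet a).toFinite.union (G.incidenceSet b).toFinite).subset ?_
    rintro f ⟨hf, x, hx, hxf⟩
    rcases Sym2.mem_iff.mp hx with rfl | rfl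
    · exact Or.inl ⟨hf, hxf⟩
    · exact Or.inr ⟨hf, hxf⟩

noncomputable def starPage (pos : V → ℕ) : Sym2 V → ℕ :=
  greedyColor (fun e f => f ∈ G.edgeSet ∧ ∃ x ∈ e, x ∈ f) (fun e => (e.map pos).sup)

variable {G}

theorem sup_map_eq_of_starPage_eq [G.LocallyFinite] {pos : V → ℕ} {e₁ e₂ : Sym2 V}
    (he₁ : e₁ ∈ G.edgeSet) (he₂ : e₂ ∈ G.edgeSet) (hpage : G.starPage pos e₁ = G.starPage pos e₂)
    {x : V} (hx₁ : x ∈ e₁) (hx₂ : x ∈ e₂) : (e₁.map pos).sup = (e₂.map pos).sup := by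
  have hfin := G.finite_setOf_mem_edgeSet_exists_mem
  rcases lt_trichotomy (e₁.map pos).sup (e₂.map pos).sup with h | h | h
  · exact absurd hpage (greedyColor_ne (hfin e₂) ⟨he₁, x, hx₂, hx₁⟩ h)
  · exact h
  · exact absurd hpage.symm (greedyColor_ne (hfin e₁) ⟨he₂, x, hx₁, hx₂⟩ h)

theorem starPage_lt [G.LocallyFinite] {pos : V → ℕ} (hpos : Function.Injective pos) {k : ℕ}
    (hdeg : ∀ v, G.degree v ≤ k) {e : Sym2 V} (he : e ∈ G.edgeSet) : G.starPage pos e < k := by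
  classical
  induction e using Sym2.ind with
  | _ a b =>
    wlog hab : pos a < pos b generalizing a b
    · rw [Sym2.eq_swap] at he ⊢
      have hne : pos a ≠ pos b := hpos.ne (G.ne_of_adj he).symm
      exact this b a he (by omega)
    have hearlier : {f | (f ∈ G.edgeSet ∧ ∃ x ∈ s(a, b), x ∈ f) ∧
        (f.map pos).sup < (s(a, b).map pos).sup} ⊆ G.incidenceSet a \ {s(a, b)} := by
      rintro f ⟨⟨hf, x, hx, hxf⟩, hlt⟩
      have hxle := Sym2.le_sup_map (f := pos) hxf
      simp only [Sym2.map_mk, Sym2.sup_mk] at hlt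
      rcases Sym2.mem_iff.mp hx with rfl | rfl
      · exact ⟨⟨hf, hxf⟩, by rintro rfl; simp at hlt⟩
      · omega
    have hab_mem : s(a, b) ∈ G.incidenceSet a := ⟨he, Sym2.mem_mk_left a b⟩
    apply greedyColor_lt (G.finite_setOf_mem_edgeSet_exists_mem s(a, b))
    calc _ ≤ (G.incidenceSet a \ {s(a, b)}).ncard :=
          Set.ncard_le_ncard hearlier (G.incidenceSet a).toFinite.sdiff
      _ = G.degree a - 1 := by
          rw [Set.ncard_sdiff_singleton_of_mem hab_mem, ncard_incidenceSet]
      _ < k := by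
          have := G.degree_pos_iff_exists_adj a |>.mpr ⟨b, he⟩
          have := hdeg a
          omega

end SimpleGraph

namespace LinearEmbedding

variable {G : SimpleGraph V} (L : LinearEmbedding G)

theorem eq_of_reachable_pageGraph {β : Type*} {key : Sym2 V → β}
    (hkey : ∀ e₁ ∈ G.edgeSet, ∀ e₂ ∈ G.edgeSet, L.page e₁ = L.page e₂ →
      ∀ x ∈ e₁, x ∈ e₂ → key e₁ = key e₂)
    {i : ℕ} {u v : V} (huv : (L.pageGraph i).Reachable u v)
    {e₁ e₂ : Sym2 V} (he₁ : e₁ ∈ G.edgeSet) (he₂ : e₂ ∈ G.edgeSet)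
    (hpage₁ : L.page e₁ = i) (hpage₂ : L.page e₂ = i) (hu : u ∈ e₁) (hv : v ∈ e₂) :
    key e₁ = key e₂ := by
  obtain ⟨w⟩ := huv
  induction w generalizing e₁ with
  | nil => exact hkey e₁ he₁ e₂ he₂ (hpage₁.trans hpage₂.symm) _ hu hv
  | @cons a b _ hadj _ ih =>
    obtain ⟨⟨hab, hpage⟩, -⟩ : (s(a, b) ∈ G.edgeSet ∧ L.page s(a, b) = i) ∧ a ≠ b := hadj
    exact (hkey e₁ he₁ _ hab (hpage₁.trans hpage.symm) a hu (Sym2.mem_mk_left a b)).trans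
      (ih hab hpage (Sym2.mem_mk_right a b) hv)

theorem isUnion_of_sup_map_eq
    (hkey : ∀ e₁ ∈ G.edgeSet, ∀ e₂ ∈ G.edgeSet, L.page e₁ = L.page e₂ →
      ∀ x ∈ e₁, x ∈ e₂ → (e₁.map L.pos).sup = (e₂.map L.pos).sup) : L.IsUnion := by
  rintro e₁ he₁ e₂ he₂ hpage ⟨u, v, hu, hv, huv⟩
  have htop := L.eq_of_reachable_pageGraph hkey huv he₁ he₂ rfl hpage.symm hu hv
  obtain ⟨t₁, ht₁, hpos₁⟩ := Sym2.exists_mem_eq_sup_map L.pos e₁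
  obtain ⟨t₂, ht₂, hpos₂⟩ := Sym2.exists_mem_eq_sup_map L.pos e₂
  obtain rfl : t₁ = t₂ := L.inj (by rw [hpos₁, hpos₂, htop])
  exact not_crosses_of_mem_of_mem ht₁ ht₂

end LinearEmbedding

theorem pnLoc_le_of_forall_degree_le [Countable V] (G : SimpleGraph V) [G.LocallyFinite] {k : ℕ}
    (hdeg : ∀ v, G.degree v ≤ k) : pnLoc G ≤ k := by
  obtain ⟨pos, hpos⟩ := Countable.exists_injective_nat V
  obtain ⟨page, hpage⟩ := Countable.exists_injective_nat (Sym2 V)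
  let L : LinearEmbedding G := ⟨pos, hpos, page⟩
  refine Nat.sInf_le ⟨L, ?_, fun v => ?_⟩
  · rintro e₁ - e₂ - h
    obtain rfl := hpage h
    exact not_crosses_of_mem_of_mem e₁.out_fst_mem e₁.out_fst_mem
  · have hpagesAt : L.pagesAt v = page '' G.incidenceSet v := by
      ext i
      simp [L, LinearEmbedding.pagesAt, incidenceSet, and_assoc]
    calc _ = (page '' G.incidenceSet v).ncard := congrArg Set.ncard hpagesAt
      _ = G.degree v := by rw [Set.ncard_image_of_injective _ hpage, G.ncard_incidenceSet]
      _ ≤ k := hdeg v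

theorem pnUnion_le_of_forall_degree_le [Countable V] (G : SimpleGraph V) [G.LocallyFinite]
    {k : ℕ} (hdeg : ∀ v, G.degree v ≤ k) : pnUnion G ≤ k := by
  obtain ⟨pos, hpos⟩ := Countable.exists_injective_nat V
  let L : LinearEmbedding G := ⟨pos, hpos, G.starPage pos⟩
  refine Nat.sInf_le ⟨L, L.isUnion_of_sup_map_eq fun _ he₁ _ he₂ h _ =>
    sup_map_eq_of_starPage_eq he₁ he₂ h, ?_⟩
  have hpages : L.pages ⊆ Set.Iio k := by
    rintro _ ⟨e, he, rfl⟩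
    exact starPage_lt hpos hdeg he
  simpa [LinearEmbedding.pageCount] using Set.ncard_le_ncard hpages (Set.finite_Iio k)

end

/-- every `k`-regular graph `G` satisfies `pnℓ(G) ≤ k` and
`pnᵤ(G) ≤ k + 2`. -/
theorem regular_pn_bounds {V : Type*} [Fintype V] (G : SimpleGraph V)
    [DecidableRel G.Adj] (k : ℕ) (hreg : G.IsRegularOfDegree k) :
    pnLoc G ≤ k ∧ pnUnion G ≤ k + 2 :=
  ⟨pnLoc_le_of_forall_degree_le G fun v => (hreg v).le,
    (pnUnion_le_of_forall_degree_le G fun v => (hreg v).le).trans (Nat.le_add_right k 2)⟩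
end

section
/- For every ℓ ∈ ℕ and every k-tree G, there exists a k-tree Ḡ such that every ℓ-local book embedding of Ḡ contains a forest embedding of G, i.e., there is a vertex subset X with Ḡ[X] ≅ G such that the restriction of the embedding to Ḡ[X] has a forest on every page. -/
/-!
Build `Ḡ` in levels: level `0` is a `K_{k+1}`, and level `t + 1` attaches more than `2k³ℓ` new
vertices to every `k`-clique on levels `≤ t`. Given an `ℓ`-local book embedding, copy `G` vertex by
vertex along a construction order `x 0, x 1, …` of the `k`-tree, sending `x j` to a vertex of
level `j` attached to the images of the earlier neighbours of `x j` (padded with base vertices).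
The edges at that clique use at most `kℓ` pages, so if every candidate had two edges to the clique
on a common page, three candidates would share the same pair and page: a `K_{2,3}` on one page,
which a book embedding forbids. Hence some candidate sends its edges to lower levels to distinct
pages, so in the copy every vertex has at most one lower neighbour on each page, and every page
is a forest.
-/

open SimpleGraph

/-- `IsKTree k G s`: the graph `G`, whose edges all lie inside the vertex set `s`,
is a `k`-tree on vertex set `s`. -/
inductive IsKTree {V : Type*} [DecidableEq V] (k : ℕ) : SimpleGraph V → Finset V → Prop
  | base (G : SimpleGraph V) (s : Finset V) (hcard : s.card = k + 1)
      (hadj : ∀ a b, G.Adj a b ↔ (a ∈ s ∧ b ∈ s ∧ a ≠ b)) :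
      IsKTree k G s
  | extend (G G' : SimpleGraph V) (s c : Finset V) (v : V)
      (hG : IsKTree k G s) (hv : v ∉ s) (hc : c ⊆ s) (hcard : c.card = k)
      (hclique : ∀ a ∈ c, ∀ b ∈ c, a ≠ b → G.Adj a b)
      (hG' : ∀ a b, G'.Adj a b ↔
        (G.Adj a b ∨ (a = v ∧ b ∈ c) ∨ (b = v ∧ a ∈ c))) :
      IsKTree k G' (insert v s)

namespace LinearEmbedding

variable {V : Type*} {G : SimpleGraph V} {L : LinearEmbedding G}

theorem IsBook.not_lt_lt_lt (hL : L.IsBook) {a b c d : V} (hac : G.Adj a c) (hbd : G.Adj b d)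
    (hp : L.page s(a, c) = L.page s(b, d)) :
    ¬(L.pos a < L.pos b ∧ L.pos b < L.pos c ∧ L.pos c < L.pos d) := fun ⟨h₁, h₂, h₃⟩ =>
  hL _ hac _ hbd hp ⟨a, b, c, d, rfl, rfl, h₁, h₂, h₃⟩

theorem IsBook.interleave (hL : L.IsBook) {c c' y z : V} {p : ℕ}
    (hy : G.Adj y c ∧ G.Adj y c' ∧ L.page s(y, c) = p ∧ L.page s(y, c') = p)
    (hz : G.Adj z c ∧ G.Adj z c' ∧ L.page s(z, c) = p ∧ L.page s(z, c') = p)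
    (hcc' : L.pos c < L.pos c') (hyz : L.pos y < L.pos z) :
    (L.pos y < L.pos c ∧ L.pos c < L.pos z ∧ L.pos z < L.pos c') ∨
      (L.pos c < L.pos y ∧ L.pos y < L.pos c' ∧ L.pos c' < L.pos z) := by
  obtain ⟨hyc, hyc', pyc, pyc'⟩ := hy
  obtain ⟨hzc, hzc', pzc, pzc'⟩ := hz
  have h₁ := hL.not_lt_lt_lt hyc hzc' (by rw [pyc, pzc'])
  have h₂ := hL.not_lt_lt_lt hzc.symm hyc' (by rw [Sym2.eq_swap, pzc, pyc'])
  have h₃ := hL.not_lt_lt_lt hyc.symm hzc'.symm (by rw [Sym2.eq_swap, pyc, Sym2.eq_swap, pzc'])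
  have h₄ := hL.not_lt_lt_lt hyc' hzc.symm (by rw [pyc', Sym2.eq_swap, pzc])
  have := L.inj.ne hyc.ne
  have := L.inj.ne hyc'.ne
  have := L.inj.ne hzc.ne
  have := L.inj.ne hzc'.ne
  omega

/-- A book embedding has no `K_{2,3}` on a single page. -/
theorem IsBook.card_le_two (hL : L.IsBook) {c c' : V} (hcc' : c ≠ c') {p : ℕ} (Y : Finset V)
    (hY : ∀ y ∈ Y, G.Adj y c ∧ G.Adj y c' ∧ L.page s(y, c) = p ∧ L.page s(y, c') = p) :
    Y.card ≤ 2 := by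
  wlog hlt : L.pos c < L.pos c' generalizing c c'
  · refine this hcc'.symm (fun y hy => ?_) ((L.inj.ne hcc').lt_or_gt.resolve_left hlt)
    obtain ⟨h₁, h₂, h₃, h₄⟩ := hY y hy
    exact ⟨h₂, h₁, h₄, h₃⟩
  by_contra! h
  obtain ⟨y₁, h₁, y₂, h₂, y₃, h₃, h₁₂, h₁₃, h₂₃⟩ := Finset.two_lt_card.mp h
  have pair : ∀ y ∈ Y, ∀ z ∈ Y, y ≠ z →
      (L.pos y < L.pos c ∧ L.pos c < L.pos z ∧ L.pos z < L.pos c') ∨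
      (L.pos c < L.pos y ∧ L.pos y < L.pos c' ∧ L.pos c' < L.pos z) ∨
      (L.pos z < L.pos c ∧ L.pos c < L.pos y ∧ L.pos y < L.pos c') ∨
      (L.pos c < L.pos z ∧ L.pos z < L.pos c' ∧ L.pos c' < L.pos y) := by
    intro y hy z hz hyz
    rcases (L.inj.ne hyz).lt_or_gt with h | h
    · rcases hL.interleave (hY y hy) (hY z hz) hlt h with h' | h' <;> simp [h']
    · rcases hL.interleave (hY z hz) (hY y hy) hlt h with h' | h' <;> simp [h']
  have := pair y₁ h₁ y₂ h₂ h₁₂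
  have := pair y₁ h₁ y₃ h₃ h₁₃
  have := pair y₂ h₂ y₃ h₃ h₂₃
  omega

theorem pagesAt_finite [Finite V] (v : V) : (L.pagesAt v).Finite :=
  (Set.finite_range L.page).subset fun _ ⟨e, _, _, he⟩ => ⟨e, he⟩

/-- Among more than `2k²·kℓ` common neighbours of a `k`-set `D`, some vertex sends its edges to
`D` on pairwise distinct pages: otherwise two of them share the same pair in `D` and the same
page, which together with a third gives a `K_{2,3}` on one page. -/
theorem IsBook.exists_injOn_page [Finite V] (hL : L.IsBook) {ℓ : ℕ} (hloc : L.IsLocal ℓ)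
    (D Y : Finset V) (hY : 2 * (D.card * D.card * (D.card * ℓ)) < Y.card)
    (hadj : ∀ y ∈ Y, ∀ d ∈ D, G.Adj y d) :
    ∃ y ∈ Y, Set.InjOn (fun d => L.page s(y, d)) D := by
  classical
  by_contra! hbad
  simp only [Set.InjOn, Finset.mem_coe, not_forall] at hbad
  choose! c hc c' hc' hpage hne using hbad
  set P : Finset ℕ := D.biUnion fun d => (pagesAt_finite (L := L) d).toFinset
  have hP : P.card ≤ D.card * ℓ := by
    calc P.card ≤ ∑ d ∈ D, (pagesAt_finite (L := L) d).toFinset.card := Finset.card_biUnion_le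
      _ ≤ ∑ _d ∈ D, ℓ := Finset.sum_le_sum fun d _ => by
          rw [← Set.ncard_eq_toFinset_card _ (pagesAt_finite d)]; exact hloc d
      _ = D.card * ℓ := by rw [Finset.sum_const, smul_eq_mul]
  have hmaps : ∀ y ∈ Y, (c y, c' y, L.page s(y, c y)) ∈ D ×ˢ D ×ˢ P := by
    intro y hy
    simp only [Finset.mem_product, P, Finset.mem_biUnion, Set.Finite.mem_toFinset]
    exact ⟨hc y hy, hc' y hy, c y, hc y hy, s(y, c y), hadj y hy _ (hc y hy),
      Sym2.mem_mk_right _ _, rfl⟩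
  have hcard : (D ×ˢ D ×ˢ P).card * 2 < Y.card := by
    simp only [Finset.card_product]
    nlinarith [Nat.mul_le_mul_left (D.card * D.card) hP]
  obtain ⟨⟨d, d', p⟩, -, hfiber⟩ :=
    Finset.exists_lt_card_fiber_of_mul_lt_card_of_maps_to hmaps hcard
  obtain ⟨y, hy⟩ := Finset.card_pos.mp (hfiber.trans' two_pos)
  obtain ⟨hyY, hyf⟩ := Finset.mem_filter.mp hy
  simp only [Prod.mk.injEq] at hyf
  refine hfiber.not_ge (hL.card_le_two (p := p) (hyf.1 ▸ hyf.2.1 ▸ hne y hyY) _ fun z hz => ?_)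
  obtain ⟨hzY, hzf⟩ := Finset.mem_filter.mp hz
  simp only [Prod.mk.injEq] at hzf
  obtain ⟨rfl, rfl, rfl⟩ := hzf
  exact ⟨hadj z hzY _ (hc z hzY), hadj z hzY _ (hc' z hzY), rfl, (hpage z hzY).symm⟩

end LinearEmbedding

/-- The top vertex of a cycle would have two neighbours of smaller rank. -/
theorem SimpleGraph.isAcyclic_of_subsingleton_lowerAdj {V α : Type*} [LinearOrder α]
    {F : SimpleGraph V} (r : V → α) (hne : ∀ ⦃u w⦄, F.Adj u w → r u ≠ r w)
    (hlow : ∀ ⦃u w₁ w₂⦄, F.Adj u w₁ → F.Adj u w₂ → r w₁ < r u → r w₂ < r u → w₁ = w₂) :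
    F.IsAcyclic := by
  classical
  intro v c hc
  obtain ⟨u, hu, hmax⟩ := c.support.toFinset.exists_max_image r ⟨v, by simp⟩
  rw [List.mem_toFinset] at hu
  have hd := hc.rotate hu
  have lower : ∀ w ∈ (c.rotate u hu).support, F.Adj u w → r w < r u := fun w hw hadj =>
    lt_of_le_of_ne (hmax w (by simpa [Walk.mem_support_rotate_iff] using hw)) (hne hadj).symm
  have h₁ := Walk.adj_snd hd.not_nil
  have h₂ := (Walk.adj_penultimate hd.not_nil).symm
  exact hd.snd_ne_penultimate (hlow h₁ h₂ (lower _ (Walk.getVert_mem_support _ _) h₁)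
    (lower _ (Walk.getVert_mem_support _ _) h₂))

section KTree

variable {V : Type*} {k : ℕ} {G : SimpleGraph V} {s : Finset V}

open Classical in
noncomputable def backNbrs (G : SimpleGraph V) (x : ℕ → V) (j : ℕ) : Finset ℕ :=
  (Finset.range j).filter fun i => G.Adj (x i) (x j)

theorem mem_backNbrs {x : ℕ → V} {i j : ℕ} : i ∈ backNbrs G x j ↔ i < j ∧ G.Adj (x i) (x j) := by
  simp [backNbrs]

/-- `x 0, …, x (s.card - 1)` enumerates `s` in an order in which the `k`-tree can be built. -/
structure IsKTreeOrder [DecidableEq V] (k : ℕ) (G : SimpleGraph V) (s : Finset V) (x : ℕ → V) :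
    Prop where
  injOn : Set.InjOn x (Finset.range s.card)
  image_range : (Finset.range s.card).image x = s
  card_backNbrs : ∀ j < s.card, (backNbrs G x j).card = min j k
  pairwise_backNbrs : ∀ j < s.card,
    (backNbrs G x j : Set ℕ).Pairwise fun i i' => G.Adj (x i) (x i')

variable [DecidableEq V]

theorem IsKTree.succ_le_card (h : IsKTree k G s) : k + 1 ≤ s.card := by
  induction h with
  | base G s hcard => exact hcard.ge
  | extend G G' s c v _ hv _ _ _ _ ih => rw [Finset.card_insert_of_notMem hv]; omega

theorem IsKTree.mem_of_adj (h : IsKTree k G s) {a b : V} (hab : G.Adj a b) : a ∈ s := by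
  induction h with
  | base G s _ hadj => exact ((hadj a b).mp hab).1
  | extend G G' s c v _ _ hc _ _ hG' ih =>
    rcases (hG' a b).mp hab with h | ⟨rfl, -⟩ | ⟨rfl, h⟩
    · exact Finset.mem_insert_of_mem (ih h)
    · exact Finset.mem_insert_self _ _
    · exact Finset.mem_insert_of_mem (hc h)

theorem Finset.exists_injOn_image_range_eq {s : Finset V} (hs : s.Nonempty) :
    ∃ x : ℕ → V, Set.InjOn x (Finset.range s.card) ∧ (Finset.range s.card).image x = s := by
  obtain ⟨a, -⟩ := hs
  have hget : ∀ i (hi : i < s.card), s.toList.getD i a = s.toList[i]'(by simpa using hi) :=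
    fun i hi => List.getD_eq_getElem _ _ _
  refine ⟨fun i => s.toList.getD i a, fun i hi j hj hij => ?_, ?_⟩
  · simp only [Finset.coe_range, Set.mem_Iio] at hi hj
    simp only [hget i hi, hget j hj] at hij
    simpa using (List.Nodup.getElem_inj_iff (Finset.nodup_toList s)).mp hij
  · ext b
    simp only [Finset.mem_image, Finset.mem_range, ← Finset.mem_toList (s := s),
      List.mem_iff_getElem, Finset.length_toList]
    exact ⟨fun ⟨i, hi, hb⟩ => ⟨i, hi, (hget i hi).symm.trans hb⟩,
      fun ⟨i, hi, hb⟩ => ⟨i, hi, (hget i hi).trans hb⟩⟩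

omit [DecidableEq V] in
theorem backNbrs_update_of_lt {G' : SimpleGraph V} {x : ℕ → V} {v : V} {m j : ℕ} (hj : j < m)
    (h : ∀ i < j, G'.Adj (x i) (x j) ↔ G.Adj (x i) (x j)) :
    backNbrs G' (Function.update x m v) j = backNbrs G x j := by
  ext i
  simp only [mem_backNbrs]
  refine and_congr_right fun hij => ?_
  rw [Function.update_of_ne (by omega), Function.update_of_ne hj.ne, h i hij]

theorem backNbrs_update_self {G' : SimpleGraph V} {x : ℕ → V} {v : V} {m : ℕ} {c : Finset V}
    (h : ∀ i < m, G'.Adj (x i) v ↔ x i ∈ c) :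
    backNbrs G' (Function.update x m v) m = (Finset.range m).filter fun i => x i ∈ c := by
  ext i
  simp only [mem_backNbrs, Finset.mem_filter, Finset.mem_range]
  refine and_congr_right fun hi => ?_
  rw [Function.update_of_ne hi.ne, Function.update_self, h i hi]

theorem image_update_range_succ {x : ℕ → V} {m : ℕ} {v : V}
    (himg : (Finset.range m).image x = s) :
    (Finset.range (m + 1)).image (Function.update x m v) = insert v s := by
  rw [Finset.range_add_one, Finset.image_insert, Function.update_self,
    Finset.image_congr (g := x) fun i hi => Function.update_of_ne (Finset.mem_range.mp hi).ne _ _,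
    himg]

theorem injOn_update_range_succ {x : ℕ → V} {m : ℕ} {v : V}
    (hinj : Set.InjOn x (Finset.range m)) (himg : (Finset.range m).image x = s) (hv : v ∉ s) :
    Set.InjOn (Function.update x m v) (Finset.range (m + 1)) := by
  have hxs : ∀ i < m, x i ∈ s := fun i hi =>
    himg ▸ Finset.mem_image_of_mem x (Finset.mem_range.mpr hi)
  intro i hi j hj hij
  simp only [Finset.coe_range, Set.mem_Iio] at hi hj
  rcases (Nat.lt_succ_iff.mp hi).lt_or_eq with hi | rfl <;>
    rcases (Nat.lt_succ_iff.mp hj).lt_or_eq with hj | rfl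
  · rw [Function.update_of_ne hi.ne, Function.update_of_ne hj.ne] at hij
    exact hinj (by simpa using hi) (by simpa using hj) hij
  · rw [Function.update_of_ne hi.ne, Function.update_self] at hij
    exact absurd (hij ▸ hxs i hi) hv
  · rw [Function.update_of_ne hj.ne, Function.update_self] at hij
    exact absurd (hij ▸ hxs j hj) hv
  · rfl

theorem IsKTreeOrder.update {G' : SimpleGraph V} {x : ℕ → V} {v : V} {c : Finset V}
    (hx : IsKTreeOrder k G s x) (hv : v ∉ s) (hk : k < s.card) (hc : c ⊆ s) (hcard : c.card = k)
    (hclique : ∀ a ∈ c, ∀ b ∈ c, a ≠ b → G'.Adj a b)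
    (hold : ∀ a ∈ s, ∀ b ∈ s, G'.Adj a b ↔ G.Adj a b) (hnew : ∀ a ∈ s, G'.Adj a v ↔ a ∈ c) :
    IsKTreeOrder k G' (insert v s) (Function.update x s.card v) := by
  obtain ⟨hinj, himg, hcardN, hpair⟩ := hx
  have hxs : ∀ i < s.card, x i ∈ s := fun i hi =>
    himg ▸ Finset.mem_image_of_mem x (Finset.mem_range.mpr hi)
  have hm : (insert v s).card = s.card + 1 := Finset.card_insert_of_notMem hv
  have hN : ∀ j < s.card, backNbrs G' (Function.update x s.card v) j = backNbrs G x j :=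
    fun j hj => backNbrs_update_of_lt hj fun i hi => hold _ (hxs i (by omega)) _ (hxs j hj)
  have hN' := backNbrs_update_self (G' := G') fun i hi => hnew _ (hxs i hi)
  have hfilter : Set.InjOn x ((Finset.range s.card).filter fun i => x i ∈ c : Finset ℕ) :=
    hinj.mono fun i hi => by simp only [Finset.coe_filter] at hi; exact hi.1
  have hcimg : ((Finset.range s.card).filter fun i => x i ∈ c).image x = c := by
    ext a
    simp only [Finset.mem_image, Finset.mem_filter, Finset.mem_range]
    refine ⟨fun ⟨i, hi, hia⟩ => hia ▸ hi.2, fun ha => ?_⟩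
    obtain ⟨i, hi, rfl⟩ := Finset.mem_image.mp (himg ▸ hc ha)
    exact ⟨i, ⟨Finset.mem_range.mp hi, ha⟩, rfl⟩
  refine ⟨hm ▸ injOn_update_range_succ hinj himg hv, hm ▸ image_update_range_succ himg,
    fun j hj => ?_, fun j hj => ?_⟩ <;> rw [hm] at hj
  · rcases (Nat.lt_succ_iff.mp hj).lt_or_eq with hj | rfl
    · rw [hN j hj, hcardN j hj]
    · rw [hN', ← Finset.card_image_of_injOn hfilter, hcimg, hcard]
      omega
  · rcases (Nat.lt_succ_iff.mp hj).lt_or_eq with hj | rfl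
    · rw [hN j hj]
      intro i hi i' hi' hii'
      have := (mem_backNbrs.mp hi).1
      have := (mem_backNbrs.mp hi').1
      rw [Function.update_of_ne (by omega), Function.update_of_ne (by omega),
        hold _ (hxs i (by omega)) _ (hxs i' (by omega))]
      exact hpair j hj hi hi' hii'
    · rw [hN']
      intro i hi i' hi' hii'
      simp only [Finset.coe_filter, Finset.mem_range, Set.mem_ofPred_eq] at hi hi'
      rw [Function.update_of_ne hi.1.ne, Function.update_of_ne hi'.1.ne]
      exact hclique _ hi.2 _ hi'.2 fun h =>
        hii' (hinj (by simpa using hi.1) (by simpa using hi'.1) h)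

theorem isKTreeOrder_of_adj_iff (hcard : s.card = k + 1)
    (hadj : ∀ a b, G.Adj a b ↔ a ∈ s ∧ b ∈ s ∧ a ≠ b) : ∃ x, IsKTreeOrder k G s x := by
  obtain ⟨x, hinj, himg⟩ := Finset.exists_injOn_image_range_eq (s := s) (by
    rw [← Finset.card_pos, hcard]; exact k.succ_pos)
  have hx : ∀ i < s.card, x i ∈ s := fun i hi =>
    himg ▸ Finset.mem_image_of_mem x (Finset.mem_range.mpr hi)
  have hadj' : ∀ i < s.card, ∀ j < s.card, i ≠ j → G.Adj (x i) (x j) := fun i hi j hj hij =>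
    (hadj _ _).mpr ⟨hx i hi, hx j hj, fun h => hij (hinj (by simpa using hi) (by simpa using hj) h)⟩
  refine ⟨x, hinj, himg, fun j hj => ?_, fun j hj i hi i' hi' hii' => ?_⟩
  · have : backNbrs G x j = Finset.range j := by
      ext i
      simp only [mem_backNbrs, Finset.mem_range, and_iff_left_iff_imp]
      exact fun hij => hadj' i (by omega) j hj hij.ne
    rw [this, Finset.card_range]
    omega
  · simp only [Finset.mem_coe, mem_backNbrs] at hi hi'
    exact hadj' i (by omega) i' (by omega) hii'

theorem IsKTree.exists_isKTreeOrder (h : IsKTree k G s) : ∃ x, IsKTreeOrder k G s x := by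
  induction h with
  | base G s hcard hadj => exact isKTreeOrder_of_adj_iff hcard hadj
  | extend G G' s c v hG hv hc hcard hclique hG' ih =>
    obtain ⟨x, hx⟩ := ih
    refine ⟨_, hx.update hv (by have := hG.succ_le_card; omega) hc hcard
      (fun a ha b hb hab => (hG' a b).mpr (Or.inl (hclique a ha b hb hab)))
      (fun a ha b hb => ?_) fun a ha => ?_⟩
    · rw [hG']
      constructor
      · rintro (h | ⟨rfl, -⟩ | ⟨rfl, -⟩)
        exacts [h, absurd ha hv, absurd hb hv]
      · exact Or.inl
    · rw [hG']
      constructor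
      · rintro (h | ⟨rfl, -⟩ | ⟨-, h⟩)
        exacts [absurd (hG.mem_of_adj h.symm) hv, absurd ha hv, h]
      · exact fun h => Or.inr (Or.inr ⟨rfl, h⟩)

end KTree

section KTreeOps

variable {V W : Type*} [DecidableEq V] [DecidableEq W] {k : ℕ} {G : SimpleGraph V} {s : Finset V}

theorem IsKTree.map (h : IsKTree k G s) (f : V ↪ W) : IsKTree k (G.map f) (s.map f) := by
  induction h with
  | base G s hcard hadj =>
    refine .base _ _ (by rw [Finset.card_map, hcard]) fun a b => ?_
    simp only [SimpleGraph.map_adj, hadj, Finset.mem_map]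
    constructor
    · rintro ⟨u, v, ⟨hu, hv, huv⟩, rfl, rfl⟩
      exact ⟨⟨u, hu, rfl⟩, ⟨v, hv, rfl⟩, f.injective.ne huv⟩
    · rintro ⟨⟨u, hu, rfl⟩, ⟨v, hv, rfl⟩, huv⟩
      exact ⟨u, v, ⟨hu, hv, fun h => huv (h ▸ rfl)⟩, rfl, rfl⟩
  | extend G G' s c v hG hv hc hcard hclique hG' ih =>
    rw [Finset.map_insert]
    refine .extend _ _ _ (c.map f) (f v) ih (by simpa using hv) (Finset.map_subset_map.mpr hc)
      (by rw [Finset.card_map, hcard]) ?_ fun a b => ?_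
    · simp only [Finset.mem_map]
      rintro _ ⟨a, ha, rfl⟩ _ ⟨b, hb, rfl⟩ hab
      exact (G.map_adj f _ _).mpr ⟨a, b, hclique a ha b hb fun h => hab (h ▸ rfl), rfl, rfl⟩
    · simp only [SimpleGraph.map_adj, hG', Finset.mem_map]
      constructor
      · rintro ⟨u, w, h | ⟨rfl, hw⟩ | ⟨rfl, hu⟩, rfl, rfl⟩
        exacts [Or.inl ⟨u, w, h, rfl, rfl⟩, Or.inr (Or.inl ⟨rfl, w, hw, rfl⟩),
          Or.inr (Or.inr ⟨rfl, u, hu, rfl⟩)]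
      · rintro (⟨u, w, h, rfl, rfl⟩ | ⟨rfl, w, hw, rfl⟩ | ⟨rfl, u, hu, rfl⟩)
        exacts [⟨u, w, Or.inl h, rfl, rfl⟩, ⟨v, w, Or.inr (Or.inl ⟨rfl, hw⟩), rfl, rfl⟩,
          ⟨u, v, Or.inr (Or.inr ⟨rfl, hu⟩), rfl, rfl⟩]

theorem IsKTree.attach (h : IsKTree k G s) {A : Finset V} (hA : Disjoint s A) (C : V → Finset V)
    (hC : ∀ a ∈ A, C a ⊆ s ∧ G.IsNClique k (C a)) {G' : SimpleGraph V}
    (hG' : ∀ u v, G'.Adj u v ↔ G.Adj u v ∨ (u ∈ A ∧ v ∈ C u) ∨ (v ∈ A ∧ u ∈ C v)) :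
    IsKTree k G' (s ∪ A) := by
  induction A using Finset.induction_on generalizing G' with
  | empty =>
    convert h
    · ext u v; simp [hG']
    · simp
  | insert a A ha ih =>
    have hsa : a ∉ s := Finset.disjoint_right.mp hA (Finset.mem_insert_self a A)
    have hCs := fun b hb => (hC b (Finset.mem_insert_of_mem hb)).1
    have hne : ∀ u ∈ s, ∀ b ∈ insert a A, u ≠ b := fun u hu b hb h =>
      Finset.disjoint_left.mp hA hu (h ▸ hb)
    let G₀ : SimpleGraph V := G ⊔ SimpleGraph.fromRel fun u v => u ∈ A ∧ v ∈ C u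
    have hG₀ : ∀ u v, G₀.Adj u v ↔ G.Adj u v ∨ (u ∈ A ∧ v ∈ C u) ∨ (v ∈ A ∧ u ∈ C v) := by
      intro u v
      simp only [G₀, SimpleGraph.sup_adj, SimpleGraph.fromRel_adj]
      refine or_congr_right ⟨fun h => h.2, fun h => ⟨?_, h⟩⟩
      rcases h with ⟨hu, hv⟩ | ⟨hv, hu⟩
      exacts [(hne v (hCs u hu hv) u (Finset.mem_insert_of_mem hu)).symm,
        hne u (hCs v hv hu) v (Finset.mem_insert_of_mem hv)]
    obtain ⟨hCa, hclique⟩ := hC a (Finset.mem_insert_self a A)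
    rw [Finset.union_insert]
    refine .extend G₀ G' (s ∪ A) (C a) a
      (ih (Finset.disjoint_insert_right.mp hA).2 (fun b hb => hC b (Finset.mem_insert_of_mem hb))
        hG₀)
      (by simp [hsa, ha]) (hCa.trans Finset.subset_union_left) hclique.card_eq
      (fun u hu v hv huv => Or.inl (hclique.isClique hu hv huv)) fun u v => ?_
    rw [hG', hG₀, Finset.mem_insert, Finset.mem_insert]
    grind

end KTreeOps

section AttachVerts

variable {M N k : ℕ} {H : SimpleGraph (Fin M)} {D : Fin N → Finset (Fin M)}

def attachVerts (H : SimpleGraph (Fin M)) (D : Fin N → Finset (Fin M)) :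
    SimpleGraph (Fin (M + N)) :=
  H.map (Fin.castAddEmb N) ⊔
    SimpleGraph.fromRel fun u v => ∃ r, u = Fin.natAdd M r ∧ ∃ a ∈ D r, v = Fin.castAdd N a

@[simp]
theorem Fin.castAdd_ne_natAdd (a : Fin M) (r : Fin N) : Fin.castAdd N a ≠ Fin.natAdd M r :=
  Fin.ne_of_val_ne (by simp only [Fin.val_castAdd, Fin.val_natAdd]; omega)

@[simp]
theorem Fin.natAdd_ne_castAdd (a : Fin M) (r : Fin N) : Fin.natAdd M r ≠ Fin.castAdd N a :=
  (Fin.castAdd_ne_natAdd a r).symm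

@[simp]
theorem attachVerts_adj_castAdd_castAdd {a b : Fin M} :
    (attachVerts H D).Adj (Fin.castAdd N a) (Fin.castAdd N b) ↔ H.Adj a b := by
  simp only [attachVerts, SimpleGraph.sup_adj, SimpleGraph.map_adj', SimpleGraph.fromRel_adj]
  simpa using fun h : H.Adj a b => h.ne

@[simp]
theorem attachVerts_adj_natAdd_castAdd {r : Fin N} {a : Fin M} :
    (attachVerts H D).Adj (Fin.natAdd M r) (Fin.castAdd N a) ↔ a ∈ D r := by
  simp [attachVerts, SimpleGraph.map_adj']

@[simp]
theorem attachVerts_adj_castAdd_natAdd {r : Fin N} {a : Fin M} :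
    (attachVerts H D).Adj (Fin.castAdd N a) (Fin.natAdd M r) ↔ a ∈ D r := by
  rw [SimpleGraph.adj_comm, attachVerts_adj_natAdd_castAdd]

@[simp]
theorem attachVerts_not_adj_natAdd_natAdd {r r' : Fin N} :
    ¬(attachVerts H D).Adj (Fin.natAdd M r) (Fin.natAdd M r') := by
  simp [attachVerts, SimpleGraph.map_adj']

theorem isKTree_attachVerts (hH : IsKTree k H Finset.univ) (hD : ∀ r, H.IsNClique k (D r)) :
    IsKTree k (attachVerts H D) Finset.univ := by
  classical
  let C : Fin (M + N) → Finset (Fin (M + N)) :=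
    Fin.addCases (fun _ => ∅) fun r => (D r).map (Fin.castAddEmb N)
  have h := (hH.map (Fin.castAddEmb N)).attach (A := Finset.univ.map (Fin.natAddEmb M))
    (by simp [Finset.disjoint_left]) C (fun u hu => ?_) (G' := attachVerts H D) fun u v => ?_
  · convert h
    ext u
    induction u using Fin.addCases <;> simp
  · obtain ⟨r, -, rfl⟩ := Finset.mem_map.mp hu
    simpa [C] using (hD r).map (f := Fin.castAddEmb N)
  · induction u using Fin.addCases <;> induction v using Fin.addCases <;>
      simp [C, SimpleGraph.map_adj']
    exact fun h => h.ne

end AttachVerts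

section Rich

variable {W : Type*}

def lowerAdj (H : SimpleGraph W) (lev : W → ℕ) (y : W) : Set W := {w | H.Adj y w ∧ lev w < lev y}

def IsRich (H : SimpleGraph W) (lev : W → ℕ) (k β t : ℕ) : Prop :=
  ∀ D : Finset W, H.IsNClique k D → (∀ d ∈ D, lev d ≤ t) →
    ∃ Y : Finset W, β < Y.card ∧ ∀ y ∈ Y, lev y = t + 1 ∧ lowerAdj H lev y = D

end Rich

section AttachVertsRich

variable {M N k T : ℕ} {H : SimpleGraph (Fin M)} {D : Fin N → Finset (Fin M)} {lev : Fin M → ℕ}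

theorem lowerAdj_attachVerts_castAdd (hlev : ∀ v, lev v ≤ T) (a : Fin M) :
    lowerAdj (attachVerts H D) (Fin.addCases lev fun _ => T + 1) (Fin.castAdd N a) =
      Fin.castAdd N '' lowerAdj H lev a := by
  ext w
  induction w using Fin.addCases with
  | left b => simp [lowerAdj, (Fin.castAdd_injective M N).eq_iff]
  | right r => simp [lowerAdj, (hlev a).trans_lt T.lt_succ_self |>.not_gt]

theorem lowerAdj_attachVerts_natAdd (hlev : ∀ v, lev v ≤ T) (r : Fin N) :
    lowerAdj (attachVerts H D) (Fin.addCases lev fun _ => T + 1) (Fin.natAdd M r) =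
      Fin.castAdd N '' D r := by
  ext w
  induction w using Fin.addCases with
  | left b => simp [lowerAdj, (Fin.castAdd_injective M N).eq_iff, hlev b]
  | right r => simp [lowerAdj]

theorem exists_eq_map_castAdd_of_lev_le {D' : Finset (Fin (M + N))}
    (h : ∀ d ∈ D', (Fin.addCases lev fun _ => T + 1 : Fin (M + N) → ℕ) d ≤ T) :
    ∃ D₀ : Finset (Fin M), D' = D₀.map (Fin.castAddEmb N) := by
  obtain ⟨D₀, -, hD₀⟩ := Finset.subset_map_iff (f := Fin.castAddEmb N) (t := Finset.univ).mp
    fun d hd => by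
      have := h d hd
      induction d using Fin.addCases <;> simp_all
  exact ⟨D₀, hD₀⟩

@[simp]
theorem isNClique_attachVerts_map_castAdd {D₀ : Finset (Fin M)} :
    (attachVerts H D).IsNClique k (D₀.map (Fin.castAddEmb N)) ↔ H.IsNClique k D₀ := by
  simp [SimpleGraph.isNClique_iff, SimpleGraph.isClique_iff, Set.Pairwise]

theorem IsRich.attachVerts {β t : ℕ} (h : IsRich H lev k β t) (hlev : ∀ v, lev v ≤ T)
    (ht : t ≤ T) : IsRich (attachVerts H D) (Fin.addCases lev fun _ => T + 1) k β t := by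
  intro D' hD' hD'lev
  obtain ⟨D₀, rfl⟩ := exists_eq_map_castAdd_of_lev_le fun d hd => (hD'lev d hd).trans ht
  obtain ⟨Y, hY, hYD⟩ := h D₀ (isNClique_attachVerts_map_castAdd.mp hD') fun d hd => by
    simpa using hD'lev _ (Finset.mem_map_of_mem _ hd)
  refine ⟨Y.map (Fin.castAddEmb N), by rwa [Finset.card_map], fun y hy => ?_⟩
  obtain ⟨y, hyY, rfl⟩ := Finset.mem_map.mp hy
  obtain ⟨hylev, hylow⟩ := hYD y hyY
  simp [hylev, lowerAdj_attachVerts_castAdd hlev, hylow]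

open Classical in
/-- Attachment sets for `c` new vertices per `k`-clique of `H`. -/
noncomputable def cliqueCopies (H : SimpleGraph (Fin M)) (k c : ℕ) :
    Fin (c * (H.cliqueFinset k).card) → Finset (Fin M) :=
  fun r => (H.cliqueFinset k).equivFin.symm (finProdFinEquiv.symm r).2

open Classical in
theorem isNClique_cliqueCopies {c : ℕ} (r : Fin (c * (H.cliqueFinset k).card)) :
    H.IsNClique k (cliqueCopies H k c r) :=
  SimpleGraph.mem_cliqueFinset_iff.mp (Subtype.prop _)

theorem isRich_attachVerts_cliqueCopies {β : ℕ} (hlev : ∀ v, lev v ≤ T) :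
    IsRich (attachVerts H (cliqueCopies H k (β + 1))) (Fin.addCases lev fun _ => T + 1) k β T := by
  classical
  intro D' hD' hD'lev
  obtain ⟨D₀, rfl⟩ := exists_eq_map_castAdd_of_lev_le hD'lev
  have hD₀ : D₀ ∈ H.cliqueFinset k :=
    SimpleGraph.mem_cliqueFinset_iff.mpr (isNClique_attachVerts_map_castAdd.mp hD')
  let q := (H.cliqueFinset k).equivFin ⟨D₀, hD₀⟩
  let copy (i : Fin (β + 1)) := Fin.natAdd M (finProdFinEquiv (i, q))
  have hcopy : Function.Injective copy := fun i j h => by simpa [copy] using h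
  refine ⟨Finset.univ.image copy, by simp [Finset.card_image_of_injective _ hcopy], fun y hy => ?_⟩
  obtain ⟨i, -, rfl⟩ := Finset.mem_image.mp hy
  simp [copy, lowerAdj_attachVerts_natAdd hlev, cliqueCopies, q]

end AttachVertsRich

/-- Start from `K_{k+1}` on level `0` and, `T` times, attach `β + 1` new vertices on the next
level to every `k`-clique. -/
theorem exists_isKTree_isRich (k β T : ℕ) :
    ∃ (M : ℕ) (H : SimpleGraph (Fin M)) (lev : Fin M → ℕ) (b : ℕ → Fin M),
      IsKTree k H Finset.univ ∧ (∀ m ≤ k, lev (b m) = 0) ∧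
      (∀ m₁ ≤ k, ∀ m₂ ≤ k, m₁ ≠ m₂ → H.Adj (b m₁) (b m₂)) ∧
      (∀ v, lev v ≤ T) ∧ ∀ t < T, IsRich H lev k β t := by
  induction T with
  | zero =>
    refine ⟨k + 1, ⊤, fun _ => 0, fun m => Fin.ofNat (k + 1) m, .base _ _ (by simp) (by simp),
      fun _ _ => rfl, fun m₁ h₁ m₂ h₂ h => ?_, fun _ => le_rfl, by simp⟩
    simp [Fin.ext_iff, Nat.mod_eq_of_lt (Nat.lt_succ_of_le h₁),
      Nat.mod_eq_of_lt (Nat.lt_succ_of_le h₂), h]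
  | succ T ih =>
    obtain ⟨M, H, lev, b, hH, hb, hbadj, hlev, hrich⟩ := ih
    refine ⟨_, attachVerts H (cliqueCopies H k (β + 1)), Fin.addCases lev fun _ => T + 1,
      fun m => Fin.castAdd _ (b m), isKTree_attachVerts hH isNClique_cliqueCopies,
      by simpa using hb, by simpa using hbadj, fun v => ?_, fun t ht => ?_⟩
    · induction v using Fin.addCases <;> simp [(hlev _).trans T.le_succ]
    · rcases (Nat.lt_succ_iff.mp ht).lt_or_eq with ht | rfl
      exacts [(hrich t ht).attachVerts hlev ht.le, isRich_attachVerts_cliqueCopies hlev]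

section Copy

variable {V W : Type*} {k ℓ : ℕ} {G : SimpleGraph V}
  {H : SimpleGraph W} (L : LinearEmbedding H) (lev : W → ℕ) (x : ℕ → V) (b : ℕ → W)

/-- Invariant of the greedy copy of `G[x 0, …, x (j - 1)]` in `H`. The base vertex `b 0` is the
image of `x 0`, and `b 1, …, b (k - i)` pad the attachment clique of `φ i` to `k` vertices. -/
structure IsGoodCopy (k : ℕ) (G : SimpleGraph V) (φ : ℕ → W) (j : ℕ) : Prop where
  lev_eq : ∀ i < j, lev (φ i) = i
  adj_iff : ∀ i < j, ∀ i' < j, H.Adj (φ i) (φ i') ↔ G.Adj (x i) (x i')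
  injOn_page : ∀ i < j, Set.InjOn (fun w => L.page s(φ i, w)) (lowerAdj H lev (φ i))
  zero_eq : φ 0 = b 0
  adj_filler : ∀ i < j, ∀ m, 1 ≤ m → m + i ≤ k → H.Adj (φ i) (b m)

variable {L lev x b} {φ : ℕ → W} {j : ℕ}

theorem IsGoodCopy.isAcyclic_page (hφ : IsGoodCopy L lev x b k G φ j)
    {X : Set W} (hX : X ⊆ φ '' Set.Iio j) (p : ℕ) :
    (SimpleGraph.fromEdgeSet {e | e ∈ H.edgeSet ∧ L.page e = p ∧ ∀ w ∈ e, w ∈ X}).IsAcyclic := by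
  have hadj : ∀ {u w}, (SimpleGraph.fromEdgeSet
      {e | e ∈ H.edgeSet ∧ L.page e = p ∧ ∀ w ∈ e, w ∈ X}).Adj u w →
      H.Adj u w ∧ L.page s(u, w) = p ∧ u ∈ X ∧ w ∈ X := by
    intro u w h
    simp only [SimpleGraph.fromEdgeSet_adj, Set.mem_ofPred_eq, SimpleGraph.mem_edgeSet,
      Sym2.mem_iff, forall_eq_or_imp, forall_eq] at h
    exact ⟨h.1.1, h.1.2.1, h.1.2.2⟩
  refine SimpleGraph.isAcyclic_of_subsingleton_lowerAdj lev (fun u w h => ?_)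
    fun u w₁ w₂ h₁ h₂ hl₁ hl₂ => ?_
  · obtain ⟨huw, -, hu, hw⟩ := hadj h
    obtain ⟨i, hi, rfl⟩ := hX hu
    obtain ⟨i', hi', rfl⟩ := hX hw
    rw [hφ.lev_eq i hi, hφ.lev_eq i' hi']
    rintro rfl
    exact huw.ne rfl
  · obtain ⟨hw₁, hp₁, hu, -⟩ := hadj h₁
    obtain ⟨hw₂, hp₂, -, -⟩ := hadj h₂
    obtain ⟨i, hi, rfl⟩ := hX hu
    exact hφ.injOn_page i hi ⟨hw₁, hl₁⟩ ⟨hw₂, hl₂⟩ (hp₁.trans hp₂.symm)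

theorem IsGoodCopy.exists_embedding [Fintype V] [DecidableEq V]
    (hφ : IsGoodCopy L lev x b k G φ (Finset.univ : Finset V).card)
    (hx : IsKTreeOrder k G Finset.univ x) :
    ∃ f : G ↪g H, Set.range f ⊆ φ '' Set.Iio (Finset.univ : Finset V).card := by
  have : ∀ a, ∃ i < (Finset.univ : Finset V).card, x i = a := fun a => by
    have h := Finset.mem_univ a
    rw [← hx.image_range] at h
    simpa using h
  choose idx hidx hxidx using this
  have hinj : Function.Injective fun a => φ (idx a) := fun a a' h => by
    have := hφ.lev_eq _ (hidx a)
    rw [show φ (idx a) = φ (idx a') from h, hφ.lev_eq _ (hidx a')] at this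
    rw [← hxidx a, ← hxidx a', this]
  refine ⟨⟨⟨fun a => φ (idx a), hinj⟩, fun {a a'} => ?_⟩, ?_⟩
  · simp only [Function.Embedding.coeFn_mk]
    rw [hφ.adj_iff _ (hidx a) _ (hidx a'), hxidx, hxidx]
  · rintro _ ⟨a, rfl⟩
    exact ⟨idx a, hidx a, rfl⟩

variable [DecidableEq W]

noncomputable def attachSet (x : ℕ → V) (b : ℕ → W) (G : SimpleGraph V) (φ : ℕ → W) (k j : ℕ) :
    Finset W :=
  (backNbrs G x j).image φ ∪ (Finset.Icc 1 (k - j)).image b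

theorem IsGoodCopy.lev_lt_of_mem_attachSet (hφ : IsGoodCopy L lev x b k G φ j)
    (hblev : ∀ m ≤ k, lev (b m) = 0) (hj : 1 ≤ j)
    {w : W} (hw : w ∈ attachSet x b G φ k j) : lev w < j := by
  simp only [attachSet, Finset.mem_union, Finset.mem_image, Finset.mem_Icc] at hw
  rcases hw with ⟨i, hi, rfl⟩ | ⟨m, ⟨-, hmk⟩, rfl⟩
  · have := (mem_backNbrs.mp hi).1
    rwa [hφ.lev_eq i this]
  · rw [hblev m (by omega)]
    exact hj

section

variable (hb : ∀ m₁ ≤ k, ∀ m₂ ≤ k, m₁ ≠ m₂ → H.Adj (b m₁) (b m₂))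
  (hblev : ∀ m ≤ k, lev (b m) = 0)
include hb hblev

omit [DecidableEq W] in
theorem IsGoodCopy.ne_filler (hφ : IsGoodCopy L lev x b k G φ j) {i m : ℕ} (hi : i < j)
    (hm : 1 ≤ m) (hmk : m ≤ k) : φ i ≠ b m := by
  intro h
  have : i = 0 := by rw [← hφ.lev_eq i hi, h, hblev m hmk]
  subst this
  exact (hb 0 (Nat.zero_le k) m hmk (by omega)).ne (hφ.zero_eq ▸ h)

theorem IsGoodCopy.mem_attachSet_iff (hφ : IsGoodCopy L lev x b k G φ j) {i : ℕ} (hi : i < j) :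
    φ i ∈ attachSet x b G φ k j ↔ i ∈ backNbrs G x j := by
  simp only [attachSet, Finset.mem_union, Finset.mem_image, Finset.mem_Icc]
  constructor
  · rintro (⟨i', hi', h⟩ | ⟨m, ⟨hm, hmk⟩, h⟩)
    · have hi'j := (mem_backNbrs.mp hi').1
      rwa [← hφ.lev_eq i hi, ← h, hφ.lev_eq i' hi'j] at ⊢
    · exact absurd h.symm (hφ.ne_filler hb hblev hi hm (by omega))
  · exact fun h => Or.inl ⟨i, h, rfl⟩

theorem IsGoodCopy.update (hφ : IsGoodCopy L lev x b k G φ j) (hj₁ : 1 ≤ j) {y : W}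
    (hylev : lev y = j) (hylow : lowerAdj H lev y = attachSet x b G φ k j)
    (hpage : Set.InjOn (fun w => L.page s(y, w)) (attachSet x b G φ k j)) :
    IsGoodCopy L lev x b k G (Function.update φ j y) (j + 1) := by
  have hold : ∀ i < j, Function.update φ j y i = φ i := fun i hi =>
    Function.update_of_ne hi.ne _ _
  have hnew : ∀ i < j, H.Adj (φ i) y ↔ G.Adj (x i) (x j) := fun i hi => by
    have : H.Adj (φ i) y ↔ φ i ∈ lowerAdj H lev y := by
      simp [lowerAdj, hylev, hφ.lev_eq i hi, hi, H.adj_comm]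
    rw [this, hylow, Finset.mem_coe, hφ.mem_attachSet_iff hb hblev hi, mem_backNbrs]
    exact and_iff_right hi
  refine ⟨fun i hi => ?_, fun i hi i' hi' => ?_, fun i hi => ?_, ?_, fun i hi m hm hmk => ?_⟩
  · rcases (Nat.lt_succ_iff.mp hi).lt_or_eq with hi | rfl
    · rw [hold i hi, hφ.lev_eq i hi]
    · rw [Function.update_self, hylev]
  · rcases (Nat.lt_succ_iff.mp hi).lt_or_eq with hi | rfl <;>
      rcases (Nat.lt_succ_iff.mp hi').lt_or_eq with hi' | rfl
    · rw [hold i hi, hold i' hi', hφ.adj_iff i hi i' hi']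
    · rw [hold i hi, Function.update_self, hnew i hi]
    · rw [hold i' hi', Function.update_self, H.adj_comm, G.adj_comm, hnew i' hi']
    · simp
  · rcases (Nat.lt_succ_iff.mp hi).lt_or_eq with hi | rfl
    · rw [hold i hi]; exact hφ.injOn_page i hi
    · rw [Function.update_self, hylow]; exact hpage
  · rw [hold 0 hj₁, hφ.zero_eq]
  · rcases (Nat.lt_succ_iff.mp hi).lt_or_eq with hi | rfl
    · rw [hold i hi]; exact hφ.adj_filler i hi m hm (by omega)
    · have : b m ∈ lowerAdj H lev y := by
        rw [hylow]
        exact Finset.mem_union_right _ (Finset.mem_image_of_mem b (by simp; omega))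
      rw [Function.update_self]
      exact this.1

variable [DecidableEq V] {s : Finset V}

theorem IsGoodCopy.isNClique_attachSet (hφ : IsGoodCopy L lev x b k G φ j)
    (hx : IsKTreeOrder k G s x) (hj : j < s.card) :
    H.IsNClique k (attachSet x b G φ k j) := by
  have hN : ∀ i ∈ backNbrs G x j, i < j := fun i hi => (mem_backNbrs.mp hi).1
  have hφinj : Set.InjOn φ (backNbrs G x j) := fun i hi i' hi' h => by
    rw [← hφ.lev_eq i (hN i hi), h, hφ.lev_eq i' (hN i' hi')]
  have hbinj : Set.InjOn b (Finset.Icc 1 (k - j)) := fun m hm m' hm' h => by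
    simp only [Finset.coe_Icc, Set.mem_Icc] at hm hm'
    by_contra hne
    exact (hb m (by omega) m' (by omega) hne).ne h
  have hdisj : Disjoint ((backNbrs G x j).image φ) ((Finset.Icc 1 (k - j)).image b) := by
    simp only [Finset.disjoint_left, Finset.mem_image, Finset.mem_Icc, not_exists, not_and]
    rintro _ ⟨i, hi, rfl⟩ m ⟨hm, hmk⟩ h
    exact hφ.ne_filler hb hblev (hN i hi) hm (by omega) h.symm
  refine ⟨fun u hu w hw huw => ?_, ?_⟩
  · simp only [attachSet, Finset.coe_union, Finset.coe_image, Set.mem_union, Set.mem_image,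
      Finset.mem_coe, Finset.mem_Icc] at hu hw
    rcases hu with ⟨i, hi, rfl⟩ | ⟨m, ⟨hm, hmk⟩, rfl⟩ <;>
      rcases hw with ⟨i', hi', rfl⟩ | ⟨m', ⟨hm', hmk'⟩, rfl⟩
    · exact (hφ.adj_iff i (hN i hi) i' (hN i' hi')).mpr
        (hx.pairwise_backNbrs j hj hi hi' fun h => huw (h ▸ rfl))
    · exact hφ.adj_filler i (hN i hi) m' hm' (by have := hN i hi; omega)
    · exact (hφ.adj_filler i' (hN i' hi') m hm (by have := hN i' hi'; omega)).symm
    · exact hb m (by omega) m' (by omega) fun h => huw (h ▸ rfl)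
  · rw [attachSet, Finset.card_union_of_disjoint hdisj, Finset.card_image_of_injOn hφinj,
      Finset.card_image_of_injOn hbinj, hx.card_backNbrs j hj, Nat.card_Icc]
    omega

theorem IsGoodCopy.exists_succ [Finite W] (hφ : IsGoodCopy L lev x b k G φ j) (hL : L.IsBook)
    (hloc : L.IsLocal ℓ) (hx : IsKTreeOrder k G s x) (hj : j < s.card) (hj₁ : 1 ≤ j)
    (hrich : IsRich H lev k (2 * (k * k * (k * ℓ))) (j - 1)) :
    ∃ φ', IsGoodCopy L lev x b k G φ' (j + 1) := by
  have hD := hφ.isNClique_attachSet hb hblev hx hj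
  obtain ⟨Y, hY, hYD⟩ := hrich _ hD fun d hd => by
    have := hφ.lev_lt_of_mem_attachSet hblev hj₁ hd; omega
  obtain ⟨y, hyY, hpage⟩ := hL.exists_injOn_page hloc _ Y (by rwa [hD.card_eq])
    fun y hy d hd => (((hYD y hy).2 ▸ hd : d ∈ lowerAdj H lev y)).1
  obtain ⟨hylev, hylow⟩ := hYD y hyY
  exact ⟨_, hφ.update hb hblev hj₁ (by omega) hylow hpage⟩

theorem exists_isGoodCopy [Finite W] (hL : L.IsBook) (hloc : L.IsLocal ℓ)
    (hx : IsKTreeOrder k G s x) (hs : 0 < s.card)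
    (hrich : ∀ t, t + 1 < s.card → IsRich H lev k (2 * (k * k * (k * ℓ))) t) :
    ∃ φ, IsGoodCopy L lev x b k G φ s.card := by
  suffices ∀ j, 1 ≤ j → j ≤ s.card → ∃ φ, IsGoodCopy L lev x b k G φ j from this _ hs le_rfl
  intro j hj₁ hj
  induction j, hj₁ using Nat.le_induction with
  | base =>
    refine ⟨fun _ => b 0, ⟨fun i hi => ?_, fun i hi i' hi' => ?_, fun i _ => ?_, rfl,
      fun i hi m hm hmk => hb 0 (Nat.zero_le k) m (by omega) (by omega)⟩⟩
    · rw [hblev 0 (Nat.zero_le k)]; omega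
    · obtain rfl : i = 0 := by omega
      obtain rfl : i' = 0 := by omega
      simp
    · simp [lowerAdj, hblev 0 (Nat.zero_le k), Set.InjOn]
  | succ j hj₁ ih =>
    obtain ⟨φ, hφ⟩ := ih (by omega)
    exact hφ.exists_succ hb hblev hL hloc hx (by omega) hj₁ (hrich (j - 1) (by omega))

end

end Copy

/-- for every `ℓ` and every `k`-tree `G` there is a `k`-tree `Ḡ` such
that every `ℓ`-local book embedding of `Ḡ` contains a forest embedding of `G`, i.e.
there is a vertex set `X` with `Ḡ[X] ≅ G` such that on every page the edges of `Ḡ`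
inside `X` form a forest. -/
theorem exists_kTree_forcing_forest_embedding {V : Type} [Fintype V] [DecidableEq V]
    (ℓ k : ℕ) (G : SimpleGraph V) (hG : IsKTree k G Finset.univ) :
    ∃ (n : ℕ) (Gbar : SimpleGraph (Fin n)), IsKTree k Gbar Finset.univ ∧
      ∀ L : LinearEmbedding Gbar, L.IsBook → L.IsLocal ℓ →
        ∃ (X : Set (Fin n)) (_ : G ≃g Gbar.induce X), ∀ i : ℕ,
          (SimpleGraph.fromEdgeSet
            {e | e ∈ Gbar.edgeSet ∧ L.page e = i ∧ ∀ w ∈ e, w ∈ X}).IsAcyclic := by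
  obtain ⟨x, hx⟩ := hG.exists_isKTreeOrder
  obtain ⟨M, H, lev, b, hH, hblev, hb, -, hrich⟩ :=
    exists_isKTree_isRich k (2 * (k * k * (k * ℓ))) (Finset.univ : Finset V).card
  refine ⟨M, H, hH, fun L hL hloc => ?_⟩
  obtain ⟨φ, hφ⟩ := exists_isGoodCopy hb hblev hL hloc hx (by have := hG.succ_le_card; omega)
    fun t ht => hrich t (by omega)
  obtain ⟨f, hf⟩ := hφ.exists_embedding hx
  exact ⟨Set.range f, f.isoInduceRange, hφ.isAcyclic_page hf⟩
end

section
/- For every k ≥ 1 there is a graph G of tree-width k with pn_ℓ(G) ≥ k (hence also pn_u(G) ≥ k). -/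
/-!
The witness is the join of a clique `K` on `k` vertices with `m` independent apexes; adding the
apexes one at a time, each stacked on `K`, shows that it is a `k`-tree. In an `ℓ`-local embedding
with `ℓ < k`, every apex sends two of its `k` edges into `K`, say to `a` and `b`, onto a common
page, which is one of the `≤ ℓ` pages at `a`. So if `m > 3k²ℓ`, four apexes share the same `a`,
`b` and page. Two of them lie in the same of the three spine intervals cut out by `a` and `b`, and
two of their edges to `a` and `b` cross; all these edges lie in one component of that page, which
even a union embedding forbids. An embedding on `ℓ` pages is `ℓ`-local, so both page numbers are
at least `k`.
-/

open SimpleGraph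

theorem crosses_irrefl {V : Type*} (pos : V → ℕ) (e : Sym2 V) : ¬ Crosses pos e e := by
  rintro ⟨a, b, c, d, rfl, h, hab, hbc, hcd⟩
  rcases Sym2.eq_iff.mp h with ⟨rfl, rfl⟩ | ⟨rfl, rfl⟩
  · exact hab.false
  · exact (hab.trans (hbc.trans hcd)).false

/-- Two of four vertices fall into the same of the three spine intervals cut out by `a` and `b`;
their edges to `a` and `b` then cross. -/
theorem exists_crosses_of_three_lt_card {V : Type*} {pos : V → ℕ} (hpos : Function.Injective pos)
    {a b : V} (hab : a ≠ b) {S : Finset V} (haS : a ∉ S) (hbS : b ∉ S) (hS : 3 < S.card) :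
    ∃ u ∈ S, ∃ w ∈ S, Crosses pos s(u, a) s(w, b) ∨ Crosses pos s(u, b) s(w, a) := by
  wlog hlt : pos a < pos b generalizing a b
  · obtain ⟨u, hu, w, hw, h⟩ := this hab.symm hbS haS
      ((hpos.ne hab).lt_or_gt.resolve_left hlt)
    exact ⟨u, hu, w, hw, h.symm⟩
  let region : V → ℕ := fun u => if pos u < pos a then 0 else if pos u < pos b then 1 else 2
  have hmaps : ∀ u ∈ S, region u ∈ Finset.range 3 := fun u _ => by
    simp only [region, Finset.mem_range]; split_ifs <;> omega
  obtain ⟨u, hu, w, hw, huw, hreg⟩ :=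
    Finset.exists_ne_map_eq_of_card_lt_of_maps_to (by simpa using hS) hmaps
  wlog huw' : pos u < pos w generalizing u w
  · exact this w hw u hu huw.symm hreg.symm ((hpos.ne huw).lt_or_gt.resolve_left huw')
  have hua : pos u ≠ pos a := hpos.ne (ne_of_mem_of_not_mem hu haS)
  have hub : pos u ≠ pos b := hpos.ne (ne_of_mem_of_not_mem hu hbS)
  have hwa : pos w ≠ pos a := hpos.ne (ne_of_mem_of_not_mem hw haS)
  have hwb : pos w ≠ pos b := hpos.ne (ne_of_mem_of_not_mem hw hbS)
  simp only [region] at hreg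
  split_ifs at hreg <;> try omega
  · exact ⟨u, hu, w, hw, .inl ⟨u, w, a, b, rfl, rfl, huw', by omega, hlt⟩⟩
  · exact ⟨w, hw, u, hu, .inl ⟨a, u, w, b, Sym2.eq_swap, rfl, by omega, huw', by omega⟩⟩
  · exact ⟨u, hu, w, hw, .inl ⟨a, b, u, w, Sym2.eq_swap, Sym2.eq_swap, hlt, by omega, huw'⟩⟩

namespace LinearEmbedding

variable {V : Type*} {G : SimpleGraph V} {L : LinearEmbedding G}

theorem IsBook.isUnion (hL : L.IsBook) : L.IsUnion :=
  fun e₁ h₁ e₂ h₂ hp _ => hL e₁ h₁ e₂ h₂ hp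

theorem isBook_of_injective_page (hL : Function.Injective L.page) : L.IsBook := by
  intro e₁ _ e₂ _ hp
  rw [hL hp]
  exact crosses_irrefl _ _

theorem exists_isBook [Countable V] (G : SimpleGraph V) : ∃ L : LinearEmbedding G, L.IsBook := by
  obtain ⟨pos, hpos⟩ := Countable.exists_injective_nat V
  obtain ⟨page, hpage⟩ := Countable.exists_injective_nat (Sym2 V)
  exact ⟨⟨pos, hpos, page⟩, isBook_of_injective_page hpage⟩

theorem pagesAt_subset_pages (v : V) : L.pagesAt v ⊆ L.pages :=
  fun _ ⟨e, he, _, hp⟩ => ⟨e, he, hp⟩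

theorem finite_pages [Finite V] (L : LinearEmbedding G) : L.pages.Finite :=
  (Set.finite_range L.page).subset fun _ ⟨e, _, hp⟩ => ⟨e, hp⟩

theorem finite_pagesAt [Finite V] (L : LinearEmbedding G) (v : V) : (L.pagesAt v).Finite :=
  L.finite_pages.subset (pagesAt_subset_pages v)

theorem isLocal_pageCount [Finite V] (L : LinearEmbedding G) : L.IsLocal L.pageCount :=
  fun v => Set.ncard_le_ncard (pagesAt_subset_pages v) L.finite_pages

theorem pageGraph_adj_of_page_eq {u v : V} (huv : G.Adj u v) {i : ℕ} (hi : L.page s(u, v) = i) :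
    (L.pageGraph i).Adj u v :=
  (fromEdgeSet_adj _).mpr ⟨⟨huv, hi⟩, huv.ne⟩

theorem IsLocal.exists_ne_page_eq [Finite V] {ℓ : ℕ} (hL : L.IsLocal ℓ) {u : V} {C : Finset V}
    (hC : ∀ a ∈ C, G.Adj u a) (hℓ : ℓ < C.card) :
    ∃ a ∈ C, ∃ b ∈ C, a ≠ b ∧ L.page s(u, a) = L.page s(u, b) := by
  have hmaps : ∀ a ∈ C, L.page s(u, a) ∈ (L.finite_pagesAt u).toFinset := fun a ha =>
    (L.finite_pagesAt u).mem_toFinset.mpr ⟨s(u, a), hC a ha, Sym2.mem_mk_left u a, rfl⟩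
  refine Finset.exists_ne_map_eq_of_card_lt_of_maps_to ?_ hmaps
  rw [← Set.ncard_eq_toFinset_card _ (L.finite_pagesAt u)]
  exact (hL u).trans_lt hℓ

/-- All these edges lie in one component of page `i`, connected through any vertex of `S`. -/
theorem IsUnion.card_le_three (hL : L.IsUnion) {a b : V} (hab : a ≠ b) {i : ℕ} {S : Finset V}
    (hS : ∀ u ∈ S, G.Adj u a ∧ G.Adj u b ∧ L.page s(u, a) = i ∧ L.page s(u, b) = i) :
    S.card ≤ 3 := by
  by_contra! hcard
  obtain ⟨u₀, hu₀⟩ := Finset.card_pos.mp (by omega : 0 < S.card)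
  obtain ⟨hu₀a, hu₀b, hpa, hpb⟩ := hS u₀ hu₀
  have hreach : (L.pageGraph i).Reachable a b :=
    (pageGraph_adj_of_page_eq hu₀a.symm (by rwa [Sym2.eq_swap])).reachable.trans
      (pageGraph_adj_of_page_eq hu₀b hpb).reachable
  obtain ⟨u, hu, w, hw, hcross | hcross⟩ := exists_crosses_of_three_lt_card L.inj hab
    (fun ha => (hS a ha).1.ne rfl) (fun hb => (hS b hb).2.1.ne rfl) hcard
  · obtain ⟨hua, -, hpua, -⟩ := hS u hu
    obtain ⟨-, hwb, -, hpwb⟩ := hS w hw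
    exact hL _ hua _ hwb (hpua.trans hpwb.symm)
      ⟨a, b, Sym2.mem_mk_right u a, Sym2.mem_mk_right w b, by rwa [hpua]⟩ hcross
  · obtain ⟨-, hub, -, hpub⟩ := hS u hu
    obtain ⟨hwa, -, hpwa, -⟩ := hS w hw
    exact hL _ hub _ hwa (hpub.trans hpwa.symm)
      ⟨b, a, Sym2.mem_mk_right u b, Sym2.mem_mk_right w a, by rw [hpub]; exact hreach.symm⟩ hcross

end LinearEmbedding

/-- The join of a clique on `K` with the independent set `s \ K`, as a graph on `s`
(for `K ⊆ s`); vertices outside `s` are isolated. -/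
def cliqueJoin {V : Type*} (K s : Finset V) : SimpleGraph V where
  Adj a b := a ≠ b ∧ a ∈ s ∧ b ∈ s ∧ (a ∈ K ∨ b ∈ K)
  symm := ⟨fun _ _ ⟨hne, ha, hb, hK⟩ => ⟨hne.symm, hb, ha, hK.symm⟩⟩
  loopless := ⟨fun _ h => h.1 rfl⟩

theorem cliqueJoin_adj {V : Type*} {K s : Finset V} {a b : V} :
    (cliqueJoin K s).Adj a b ↔ a ≠ b ∧ a ∈ s ∧ b ∈ s ∧ (a ∈ K ∨ b ∈ K) :=
  Iff.rfl

section cliqueJoin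

variable {V : Type*} [DecidableEq V]

theorem isKTree_cliqueJoin (K : Finset V) {t : Finset V} (ht : t.Nonempty) (hKt : Disjoint K t) :
    IsKTree K.card (cliqueJoin K (K ∪ t)) (K ∪ t) := by
  induction ht using Finset.Nonempty.cons_induction with
  | singleton v =>
    have hv : v ∉ K := Finset.disjoint_singleton_right.mp hKt
    refine IsKTree.base _ _ (by simp [hv]) fun a b => ?_
    simp only [cliqueJoin_adj, Finset.mem_union, Finset.mem_singleton]
    constructor
    · rintro ⟨hne, ha, hb, -⟩
      exact ⟨ha, hb, hne⟩
    · rintro ⟨ha, hb, hne⟩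
      refine ⟨hne, ha, hb, ?_⟩
      rcases ha with ha | rfl
      · exact .inl ha
      · exact .inr (hb.resolve_right hne.symm)
  | cons v t hvt ht ih =>
    rw [Finset.cons_eq_insert, Finset.disjoint_insert_right] at hKt
    rw [Finset.cons_eq_insert, Finset.union_insert]
    refine IsKTree.extend _ _ _ K v (ih hKt.2) (by simp [hKt.1, hvt]) Finset.subset_union_left rfl
      (fun a ha b hb hne =>
        ⟨hne, Finset.mem_union_left t ha, Finset.mem_union_left t hb, .inl ha⟩) fun a b => ?_
    simp only [cliqueJoin_adj, Finset.mem_insert, Finset.mem_union]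
    have hvK := hKt.1
    constructor
    · rintro ⟨hne, ha, hb, hK⟩
      rcases ha with rfl | ha <;> rcases hb with rfl | hb
      · exact absurd rfl hne
      · exact .inr (.inl ⟨rfl, hK.resolve_left hvK⟩)
      · exact .inr (.inr ⟨rfl, hK.resolve_right hvK⟩)
      · exact .inl ⟨hne, ha, hb, hK⟩
    · rintro (⟨hne, ha, hb, hK⟩ | ⟨rfl, hb⟩ | ⟨rfl, ha⟩)
      · exact ⟨hne, .inr ha, .inr hb, hK⟩
      · exact ⟨fun h => hvK (h ▸ hb), .inl rfl, .inr (.inl hb), .inr hb⟩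
      · exact ⟨fun h => hvK (h ▸ ha), .inr (.inl ha), .inl rfl, .inl ha⟩

theorem card_compl_le_of_isUnion_of_isLocal [Fintype V] {K : Finset V}
    {L : LinearEmbedding (cliqueJoin K Finset.univ)} (hU : L.IsUnion) {ℓ : ℕ} (hℓ : ℓ < K.card)
    (hloc : L.IsLocal ℓ) : Kᶜ.card ≤ 3 * K.card ^ 2 * ℓ := by
  have hadj : ∀ u ∈ Kᶜ, ∀ a ∈ K, (cliqueJoin K Finset.univ).Adj u a := fun u hu a ha =>
    ⟨ne_of_mem_of_not_mem ha (Finset.mem_compl.mp hu) |>.symm, Finset.mem_univ _,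
      Finset.mem_univ _, .inr ha⟩
  let fiber : V × V → ℕ → Finset V := fun ab i =>
    Kᶜ.filter fun u => L.page s(u, ab.1) = i ∧ L.page s(u, ab.2) = i
  have hcover : Kᶜ ⊆ K.offDiag.biUnion fun ab =>
      (L.finite_pagesAt ab.1).toFinset.biUnion (fiber ab) := by
    intro u hu
    obtain ⟨a, ha, b, hb, hab, hpage⟩ := hloc.exists_ne_page_eq (hadj u hu) hℓ
    simp only [Finset.mem_biUnion, Finset.mem_offDiag, Set.Finite.mem_toFinset,
      Finset.mem_filter, fiber]
    exact ⟨(a, b), ⟨ha, hb, hab⟩, _, ⟨s(u, a), hadj u hu a ha, Sym2.mem_mk_right u a, rfl⟩,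
      hu, rfl, hpage.symm⟩
  have hfiber : ∀ ab ∈ K.offDiag, ∀ i, (fiber ab i).card ≤ 3 := by
    intro ab hab i
    obtain ⟨ha, hb, hne⟩ := Finset.mem_offDiag.mp hab
    refine hU.card_le_three (i := i) hne fun u hu => ?_
    obtain ⟨hu, hpa, hpb⟩ := Finset.mem_filter.mp hu
    exact ⟨hadj u hu _ ha, hadj u hu _ hb, hpa, hpb⟩
  calc Kᶜ.card
      ≤ ∑ ab ∈ K.offDiag, ∑ i ∈ (L.finite_pagesAt ab.1).toFinset, (fiber ab i).card :=
        (Finset.card_le_card hcover).trans <| Finset.card_biUnion_le.trans <|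
          Finset.sum_le_sum fun _ _ => Finset.card_biUnion_le
    _ ≤ ∑ _ab ∈ K.offDiag, 3 * ℓ := by
        refine Finset.sum_le_sum fun ab hab => ?_
        refine (Finset.sum_le_sum fun i _ => hfiber ab hab i).trans ?_
        rw [Finset.sum_const, smul_eq_mul, mul_comm,
          ← Set.ncard_eq_toFinset_card _ (L.finite_pagesAt ab.1)]
        exact Nat.mul_le_mul_left 3 (hloc ab.1)
    _ ≤ 3 * K.card ^ 2 * ℓ := by
        rw [Finset.sum_const, smul_eq_mul, Finset.offDiag_card]
        calc (K.card * K.card - K.card) * (3 * ℓ) ≤ K.card * K.card * (3 * ℓ) :=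
              Nat.mul_le_mul_right _ (Nat.sub_le _ _)
          _ = 3 * K.card ^ 2 * ℓ := by ring

end cliqueJoin

theorem le_pnLoc {V : Type*} [Finite V] {G : SimpleGraph V} {k : ℕ}
    (h : ∀ L : LinearEmbedding G, L.IsBook → ∀ ℓ, L.IsLocal ℓ → k ≤ ℓ) : k ≤ pnLoc G := by
  obtain ⟨L, hL⟩ := LinearEmbedding.exists_isBook G
  exact le_csInf ⟨_, L, hL, L.isLocal_pageCount⟩ fun ℓ ⟨L, hL, hℓ⟩ => h L hL ℓ hℓ

theorem le_pnUnion {V : Type*} [Countable V] {G : SimpleGraph V} {k : ℕ}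
    (h : ∀ L : LinearEmbedding G, L.IsUnion → k ≤ L.pageCount) : k ≤ pnUnion G := by
  obtain ⟨L, hL⟩ := LinearEmbedding.exists_isBook G
  exact le_csInf ⟨_, L, hL.isUnion, le_rfl⟩ fun j ⟨L, hL, hj⟩ => (h L hL).trans hj

theorem exists_kTree_pnLoc_ge_general (k : ℕ) :
    ∃ (n : ℕ) (G : SimpleGraph (Fin n)), IsKTree k G Finset.univ ∧
      k ≤ pnLoc G ∧ k ≤ pnUnion G := by
  set m := 3 * k ^ 2 * (k - 1) + 1
  let K : Finset (Fin (k + m)) := Finset.Iio ⟨k, by omega⟩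
  have hK : K.card = k := Fin.card_Iio _
  have hKc : Kᶜ.card = m := by rw [Finset.card_compl, hK, Fintype.card_fin]; omega
  have hbound : ∀ L : LinearEmbedding (cliqueJoin K Finset.univ), L.IsUnion →
      ∀ ℓ, L.IsLocal ℓ → k ≤ ℓ := by
    intro L hL ℓ hℓ
    by_contra! hlt
    have hm := card_compl_le_of_isUnion_of_isLocal hL (hK.symm ▸ hlt) hℓ
    rw [hK, hKc] at hm
    have hℓk : 3 * k ^ 2 * ℓ ≤ 3 * k ^ 2 * (k - 1) := Nat.mul_le_mul_left _ (by omega)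
    omega
  refine ⟨k + m, cliqueJoin K Finset.univ, ?_,
    le_pnLoc fun L hL ℓ hℓ => hbound L hL.isUnion ℓ hℓ,
    le_pnUnion fun L hL => hbound L hL _ L.isLocal_pageCount⟩
  have hKt :=
    isKTree_cliqueJoin K (Finset.card_pos.mp (by omega : 0 < Kᶜ.card)) disjoint_compl_right
  rwa [hK, Finset.union_compl] at hKt

/-- for every `k ≥ 1` there is a graph of tree-width `k`
(namely a `k`-tree) with local page number at least `k`, hence union page
number at least `k`. -/
theorem exists_kTree_pnLoc_ge (k : ℕ) (hk : 1 ≤ k) :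
    ∃ (n : ℕ) (G : SimpleGraph (Fin n)), IsKTree k G Finset.univ ∧
      k ≤ pnLoc G ∧ k ≤ pnUnion G :=
  exists_kTree_pnLoc_ge_general k
end

section
/- In the unique proper (k+1)-coloring of a k-tree G, every pair of distinct color classes induces a tree in G, every vertex lies in exactly k of these k(k+1)/2 trees, and every (k+1)-clique of G has its k(k+1)/2 edges in pairwise distinct trees. -/
/-!
Induct along the construction of the `k`-tree. When a vertex `v` is joined to a `k`-clique `c`,
`insert v c` is a `(k+1)`-clique, so the coloring maps it bijectively onto the colors. Hence, for
colors `i ≠ j` with `v` in one of the two classes, `v` has exactly one neighbor in the other: in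
the graph induced by the two classes, `v` is a leaf hung on the previous tree, which keeps it
connected and acyclic. The clique claim only uses that a coloring is injective on cliques.
-/

open SimpleGraph

namespace SimpleGraph

variable {V α : Type*} {G : SimpleGraph V}

lemma Walk.IsCycle.not_subsingleton_neighborSet {u a : V} {p : G.Walk u u} (hp : p.IsCycle)
    (ha : a ∈ p.support) : ¬ (G.neighborSet a).Subsingleton := by
  classical
  have hq := hp.rotate ha
  exact fun h => hq.snd_ne_penultimate
    (h (Walk.adj_snd hq.not_nil) (Walk.adj_penultimate hq.not_nil).symm)

/-- Every vertex of a cycle has two neighbors on it, so no edge of a cycle has an endpoint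
of degree at most one. -/
lemma IsAcyclic.of_forall_adj {H H' : SimpleGraph V} (hH : H.IsAcyclic)
    (h : ∀ a b, H'.Adj a b → H.Adj a b ∨ (H'.neighborSet a).Subsingleton ∨
      (H'.neighborSet b).Subsingleton) : H'.IsAcyclic := by
  intro u p hp
  have hedges : ∀ e ∈ p.edges, e ∈ H.edgeSet := by
    intro e he
    induction e using Sym2.ind with
    | h a b =>
      have ha := hp.not_subsingleton_neighborSet (p.fst_mem_support_of_mem_edges he)
      have hb := hp.not_subsingleton_neighborSet (p.snd_mem_support_of_mem_edges he)
      simpa [ha, hb] using h a b (p.edges_subset_edgeSet he)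
  exact hH (p.transfer H hedges) (hp.transfer hedges)

lemma Coloring.injOn_of_isClique (C : G.Coloring α) {s : Set V} (hs : G.IsClique s) :
    s.InjOn C :=
  fun _ hx _ hy hxy => by_contra fun hne => C.valid (hs hx hy hne) hxy

lemma Coloring.subsingleton_neighborSet_induce_colorPair (C : G.Coloring α) {i j : α}
    (a : {v | C v = i ∨ C v = j}) (ha : (G.neighborSet a).InjOn C) :
    ((G.induce {v | C v = i ∨ C v = j}).neighborSet a).Subsingleton := by
  intro x hx y hy
  have hxa := C.valid hx
  have hya := C.valid hy
  have hcol : C x = C y := by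
    rcases a.2 with h | h <;> rcases x.2 with h' | h' <;> rcases y.2 with h'' | h'' <;>
      simp_all
  exact Subtype.ext (ha hx hy hcol)

end SimpleGraph

namespace Sym2

variable {α β : Type*}

lemma ncard_setOf_not_isDiag_mem [Fintype α] [DecidableEq α] (a : α) :
    {p : Sym2 α | ¬ p.IsDiag ∧ a ∈ p}.ncard = Fintype.card α - 1 := by
  have : {p : Sym2 α | ¬ p.IsDiag ∧ a ∈ p} = (⊤ : SimpleGraph α).incidenceSet a := by
    ext p; simp [incidenceSet, edgeSet_top]
  rw [this, ← complete_graph_degree a, ← card_incidenceSet_eq_degree,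
    Set.ncard_eq_toFinset_card', Set.toFinset_card]

lemma map_injOn {f : α → β} {s : Set α} (hf : s.InjOn f) :
    {e : Sym2 α | ∀ x ∈ e, x ∈ s}.InjOn (Sym2.map f) := by
  intro e₁ he₁ e₂ he₂ h
  induction e₁ using Sym2.ind with | h a b => ?_
  induction e₂ using Sym2.ind with | h x y => ?_
  simp only [Set.mem_ofPred_eq, Sym2.mem_iff, forall_eq_or_imp, forall_eq] at he₁ he₂
  rw [Sym2.map_mk, Sym2.map_mk, Sym2.eq_iff] at h
  rcases h with ⟨hax, hby⟩ | ⟨hay, hbx⟩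
  · rw [hf he₁.1 he₂.1 hax, hf he₁.2 he₂.2 hby]
  · rw [hf he₁.1 he₂.2 hay, hf he₁.2 he₂.1 hbx, Sym2.eq_swap]

end Sym2

namespace IsKTree

section Extension

variable {V : Type*} {k : ℕ} {G G' : SimpleGraph V} {c : Finset V} {v : V}

lemma le_of_extend
    (hG' : ∀ a b, G'.Adj a b ↔ (G.Adj a b ∨ (a = v ∧ b ∈ c) ∨ (b = v ∧ a ∈ c))) :
    G ≤ G' :=
  fun a b hab => (hG' a b).2 (Or.inl hab)

lemma isNClique_insert_of_extend [DecidableEq V] (hv : v ∉ c) (hcard : c.card = k)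
    (hclique : ∀ a ∈ c, ∀ b ∈ c, a ≠ b → G.Adj a b)
    (hG' : ∀ a b, G'.Adj a b ↔ (G.Adj a b ∨ (a = v ∧ b ∈ c) ∨ (b = v ∧ a ∈ c))) :
    G'.IsNClique (k + 1) (insert v c) := by
  refine ⟨?_, by rw [Finset.card_insert_of_notMem hv, hcard]⟩
  rw [Finset.coe_insert]
  refine IsClique.insert (fun a ha b hb hab => le_of_extend hG' (hclique a ha b hb hab)) ?_
  exact fun b hb _ => (hG' v b).2 (Or.inr (Or.inl ⟨rfl, hb⟩))

end Extension

variable {V α : Type*} [DecidableEq V] {k : ℕ} {G : SimpleGraph V} {s : Finset V}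

lemma mem_of_adj_s19 (hG : IsKTree k G s) {a b : V} (hab : G.Adj a b) : a ∈ s := by
  induction hG generalizing a b with
  | base G s _ hadj => exact ((hadj a b).1 hab).1
  | extend G G' s c v _ _ hc _ _ hG' ih =>
    rcases (hG' a b).1 hab with h | ⟨rfl, _⟩ | ⟨_, ha⟩
    · exact Finset.mem_insert_of_mem (ih h)
    · exact Finset.mem_insert_self _ _
    · exact Finset.mem_insert_of_mem (hc ha)

lemma exists_isNClique (hG : IsKTree k G s) : ∃ t ⊆ s, G.IsNClique (k + 1) t := by
  induction hG with
  | base G s hcard hadj =>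
    exact ⟨s, subset_rfl, ⟨fun a ha b hb hab => (hadj a b).2 ⟨ha, hb, hab⟩, hcard⟩⟩
  | extend G G' s c v _ hv hc hcard hclique hG' _ =>
    exact ⟨insert v c, Finset.insert_subset_insert v hc,
      isNClique_insert_of_extend (fun h => hv (hc h)) hcard hclique hG'⟩

lemma exists_mem_color (hG : IsKTree k G s) (C : G.Coloring (Fin (k + 1))) (i : Fin (k + 1)) :
    ∃ u ∈ s, C u = i := by
  obtain ⟨t, hts, ht⟩ := hG.exists_isNClique
  obtain ⟨u, hu, hui⟩ := C.surjOn_of_card_le_isClique ht.isClique (by simp [ht.card_eq])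
    (Set.mem_univ i)
  exact ⟨u, hts hu, hui⟩

lemma isAcyclic_induce_colorPair (hG : IsKTree k G s) (C : G.Coloring α) (i j : α) :
    (G.induce {v | C v = i ∨ C v = j}).IsAcyclic := by
  induction hG with
  | base G s _ hadj =>
    have hinj : (s : Set V).InjOn C :=
      C.injOn_of_isClique fun a ha b hb hab => (hadj a b).2 ⟨ha, hb, hab⟩
    refine isAcyclic_bot.of_forall_adj fun a b _ => Or.inr (Or.inl ?_)
    exact C.subsingleton_neighborSet_induce_colorPair a
      (hinj.mono fun x hx => ((hadj a x).1 hx).2.1)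
  | extend G G' s c v hG hv hc _ hclique hG' ih =>
    have hle := le_of_extend hG'
    have hinj : (c : Set V).InjOn C :=
      C.injOn_of_isClique fun a ha b hb hab => hle (hclique a ha b hb hab)
    have hnbr : G'.neighborSet v ⊆ c := by
      intro x hx
      rcases (hG' v x).1 hx with h | ⟨_, h⟩ | ⟨rfl, h⟩
      · exact absurd (hG.mem_of_adj_s19 h) hv
      · exact h
      · exact absurd (hc h) hv
    have hv_subsingleton : ∀ a : {x | C x = i ∨ C x = j}, a.1 = v →
        ((G'.induce {x | C x = i ∨ C x = j}).neighborSet a).Subsingleton := by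
      rintro a rfl
      exact C.subsingleton_neighborSet_induce_colorPair a (hinj.mono hnbr)
    refine (ih (C.comp (Hom.ofLE hle))).of_forall_adj fun a b hab => ?_
    rcases (hG' a b).1 hab with h | ⟨ha, _⟩ | ⟨hb, _⟩
    · exact Or.inl h
    · exact Or.inr (Or.inl (hv_subsingleton a ha))
    · exact Or.inr (Or.inr (hv_subsingleton b hb))

lemma reachable_induce_colorPair (hG : IsKTree k G s) (C : G.Coloring (Fin (k + 1)))
    {i j : Fin (k + 1)} (hij : i ≠ j) {a b : {v | C v = i ∨ C v = j}} (ha : a.1 ∈ s)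
    (hb : b.1 ∈ s) : (G.induce {v | C v = i ∨ C v = j}).Reachable a b := by
  induction hG with
  | base G s _ hadj =>
    by_cases hab : a = b
    · exact hab ▸ Reachable.refl a
    · exact Adj.reachable ((hadj a b).2 ⟨ha, hb, fun h => hab (Subtype.ext h)⟩)
  | extend G G' s c v hG hv hc hcard hclique hG' ih =>
    have hle := le_of_extend hG'
    have hclique' := isNClique_insert_of_extend (fun h => hv (hc h)) hcard hclique hG'
    have hstep : ∀ a : {x | C x = i ∨ C x = j}, a.1 ∈ insert v s →
        ∃ a' : {x | C x = i ∨ C x = j},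
          a'.1 ∈ s ∧ (G'.induce {x | C x = i ∨ C x = j}).Reachable a a' := by
      rintro a ha
      rcases Finset.mem_insert.1 ha with hav | has
      · obtain ⟨ℓ, hℓ, hℓv⟩ : ∃ ℓ, (ℓ = i ∨ ℓ = j) ∧ ℓ ≠ C v := by
          rw [← hav]
          rcases a.2 with h | h
          · exact ⟨j, Or.inr rfl, by rw [h]; exact hij.symm⟩
          · exact ⟨i, Or.inl rfl, by rw [h]; exact hij⟩
        obtain ⟨x, hx, rfl⟩ := C.surjOn_of_card_le_isClique hclique'.isClique
          (by simp [hclique'.card_eq]) (Set.mem_univ ℓ)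
        have hxv : x ≠ v := fun h => hℓv (h ▸ rfl)
        have hxc : x ∈ c := (Finset.mem_insert.1 hx).resolve_left hxv
        refine ⟨⟨x, hℓ⟩, hc hxc, Adj.reachable ?_⟩
        exact (hG' a x).2 (Or.inr (Or.inl ⟨hav, hxc⟩))
      · exact ⟨a, has, Reachable.refl a⟩
    obtain ⟨a', ha's, haa'⟩ := hstep a ha
    obtain ⟨b', hb's, hbb'⟩ := hstep b hb
    have ha'b' : (G'.induce {x | C x = i ∨ C x = j}).Reachable a' b' :=
      Reachable.mono (fun _ _ h => hle h) (ih (C.comp (Hom.ofLE hle)) ha's hb's)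
    exact haa'.trans (ha'b'.trans hbb'.symm)

end IsKTree

/-- for the (unique) proper `(k+1)`-coloring `φ` of a `k`-tree `G`:
every pair of distinct color classes induces a tree, every vertex lies in exactly
`k` of these `k(k+1)/2` trees, and every `(k+1)`-clique has all its edges in
pairwise distinct trees. -/
theorem kTree_coloring_tree_decomposition {V : Type*} [Fintype V] [DecidableEq V]
    (k : ℕ) (G : SimpleGraph V) (hG : IsKTree k G Finset.univ)
    (φ : V → Fin (k + 1)) (hφ : ∀ ⦃u v⦄, G.Adj u v → φ u ≠ φ v) :
    (∀ i j : Fin (k + 1), i ≠ j →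
        (G.induce {v | φ v = i ∨ φ v = j}).IsTree) ∧
    (∀ v : V, {p : Sym2 (Fin (k + 1)) | ¬ p.IsDiag ∧ φ v ∈ p}.ncard = k) ∧
    (∀ s : Finset V, G.IsNClique (k + 1) s →
      ∀ e₁ ∈ G.edgeSet, ∀ e₂ ∈ G.edgeSet,
        (∀ x ∈ e₁, x ∈ s) → (∀ x ∈ e₂, x ∈ s) →
        Sym2.map φ e₁ = Sym2.map φ e₂ → e₁ = e₂) := by
  let C : G.Coloring (Fin (k + 1)) := Coloring.mk φ fun h => hφ h
  refine ⟨fun i j hij => ⟨?_, hG.isAcyclic_induce_colorPair C i j⟩, fun v => ?_, ?_⟩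
  · obtain ⟨u, -, hu⟩ := hG.exists_mem_color C i
    have : Nonempty {v | φ v = i ∨ φ v = j} := ⟨⟨u, Or.inl hu⟩⟩
    exact Connected.mk fun a b =>
      hG.reachable_induce_colorPair C hij (Finset.mem_univ a.1) (Finset.mem_univ b.1)
  · simpa using Sym2.ncard_setOf_not_isDiag_mem (φ v)
  · intro s hs e₁ _ e₂ _ h₁ h₂ hmap
    exact Sym2.map_injOn (C.injOn_of_isClique hs.isClique) h₁ h₂ hmap
end
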